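/- arXiv:2505.09200 — 8 statements merged into one kernel-verified Lean document; each statement's English description precedes it below -/
import Mathlib

section
/- Let n ≥ 1 and let K ⊆ ℝⁿ be nonempty and compact. Then K is a ball-body if and only if K is convex and for every point x in the topological boundary of K there exists y ∈ ℝⁿ with K ⊆ B(y,1) and ‖x − y‖ = 1 (such a y necessarily lies in K^c). -/
/-!
A ball-body `K = (K^c)^c` is an intersection of unit balls, hence convex. If `x ∈ ∂K` had
distance `r < 1` from every point of `K^c` (a compact set, so `r` is attained), the ball
`B(x, 1 - r)` would lie in `(K^c)^c = K` and `x` would be interior.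

Conversely, let `z ∉ K` and let `p` be its nearest point in `K`, so that `K` lies in the
half-space `⟪z - p, · - p⟫ ≤ 0` and `p ∈ ∂K`. Reflecting the centre `y` of the supporting unit
ball at `p` into that half-space if necessary gives a point `y' ∈ K^c` with `‖p - y'‖ = 1` and
`‖z - y'‖² ≥ ‖z - p‖² + ‖p - y'‖² > 1`, so `z ∉ (K^c)^c`.
-/

open Metric Set

noncomputable section

/-- The `c`-dual of a set `A ⊆ ℝⁿ`. -/
def cDual {n : ℕ} (A : Set (EuclideanSpace ℝ (Fin n))) : Set (EuclideanSpace ℝ (Fin n)) :=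
  {y | ∀ x ∈ A, ‖x - y‖ ≤ 1}

/-- The `c`-hull of a set: `conv_c(A) = (A^c)^c`. -/
def cHull {n : ℕ} (A : Set (EuclideanSpace ℝ (Fin n))) : Set (EuclideanSpace ℝ (Fin n)) :=
  cDual (cDual A)

open RealInnerProductSpace Topology

section InnerProductSpace

variable {E : Type*} [NormedAddCommGroup E] [InnerProductSpace ℝ E]

theorem notMem_interior_of_forall_inner_sub_nonpos {K : Set E} {u p : E} (hu : u ≠ 0)
    (h : ∀ w ∈ K, ⟪u, w - p⟫ ≤ 0) : p ∉ interior K := by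
  intro hp
  have hpath : Filter.Tendsto (fun t : ℝ => p + t • u) (𝓝[>] 0) (𝓝 p) := by
    have : Continuous fun t : ℝ => p + t • u := by fun_prop
    simpa using (this.tendsto 0).mono_left nhdsWithin_le_nhds
  obtain ⟨t, htK, ht⟩ :=
    ((hpath.eventually (mem_interior_iff_mem_nhds.1 hp)).and self_mem_nhdsWithin).exists
  have hle := h _ htK
  rw [add_sub_cancel_left, inner_smul_right, real_inner_self_eq_norm_sq] at hle
  have hpos : 0 < t * ‖u‖ ^ 2 := mul_pos ht (by positivity)
  linarith

/-- Reflecting `y` in the hyperplane through `p` orthogonal to `u`, if necessary, moves it into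
the half-space `⟪u, · - p⟫ ≤ 0` without increasing its distance to any point of that half-space. -/
theorem exists_reflect_into_halfSpace (u p y : E) :
    ∃ y' : E, 0 ≤ ⟪u, p - y'⟫ ∧ ‖p - y'‖ = ‖p - y‖ ∧
      ∀ k, ⟪u, k - p⟫ ≤ 0 → ‖k - y'‖ ≤ ‖k - y‖ := by
  by_cases hβ : 0 ≤ ⟪u, p - y⟫
  · exact ⟨y, hβ, rfl, fun _ _ => le_rfl⟩
  push Not at hβ
  have hu : u ≠ 0 := by rintro rfl; simp at hβ
  have hd : 0 < ‖u‖ ^ 2 := by positivity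
  set s := 2 * ⟪u, p - y⟫ / ‖u‖ ^ 2
  have hs_neg : s < 0 := div_neg_of_neg_of_pos (by linarith) hd
  have hsd : s * ‖u‖ ^ 2 = 2 * ⟪u, p - y⟫ := div_mul_cancel₀ _ hd.ne'
  refine ⟨y + s • u, ?_, ?_, fun k hk => ?_⟩
  · rw [sub_add_eq_sub_sub, inner_sub_right, inner_smul_right, real_inner_self_eq_norm_sq, hsd]
    linarith
  · rw [← sq_eq_sq₀ (norm_nonneg _) (norm_nonneg _), sub_add_eq_sub_sub, norm_sub_sq_real,
      inner_smul_right, norm_smul, mul_pow, Real.norm_eq_abs, sq_abs, real_inner_comm]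
    nlinarith
  · rw [← sq_le_sq₀ (norm_nonneg _) (norm_nonneg _), sub_add_eq_sub_sub, norm_sub_sq_real,
      inner_smul_right, norm_smul, mul_pow, Real.norm_eq_abs, sq_abs, real_inner_comm,
      show k - y = (k - p) + (p - y) by abel, inner_add_right]
    nlinarith [mul_nonneg_of_nonpos_of_nonpos hs_neg.le hk]

end InnerProductSpace

section CDual

variable {n : ℕ}

theorem mem_cDual_iff_subset_closedBall {A : Set (EuclideanSpace ℝ (Fin n))}
    {y : EuclideanSpace ℝ (Fin n)} : y ∈ cDual A ↔ A ⊆ closedBall y 1 := by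
  simp [cDual, subset_def, dist_eq_norm]

theorem cDual_eq_iInter (A : Set (EuclideanSpace ℝ (Fin n))) :
    cDual A = ⋂ x ∈ A, closedBall x 1 := by
  ext y
  simp [cDual, dist_eq_norm, norm_sub_rev y]

theorem convex_cDual (A : Set (EuclideanSpace ℝ (Fin n))) : Convex ℝ (cDual A) := by
  rw [cDual_eq_iInter]
  exact convex_iInter₂ fun x _ => convex_closedBall x 1

theorem isCompact_cDual {A : Set (EuclideanSpace ℝ (Fin n))} (hA : A.Nonempty) :
    IsCompact (cDual A) := by
  obtain ⟨a, ha⟩ := hA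
  refine (isCompact_closedBall a 1).of_isClosed_subset ?_ fun y hy => ?_
  · rw [cDual_eq_iInter]
    exact isClosed_biInter fun x _ => isClosed_closedBall
  · rw [mem_closedBall', dist_eq_norm]
    exact hy a ha

theorem subset_cHull (A : Set (EuclideanSpace ℝ (Fin n))) : A ⊆ cHull A :=
  fun x hx y hy => norm_sub_rev x y ▸ hy x hx

theorem ball_subset_cHull {A : Set (EuclideanSpace ℝ (Fin n))} {x : EuclideanSpace ℝ (Fin n)}
    {r : ℝ} (h : ∀ y ∈ cDual A, ‖x - y‖ ≤ r) : ball x (1 - r) ⊆ cHull A := by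
  intro z hz y hy
  rw [mem_ball', dist_eq_norm] at hz
  calc ‖y - z‖ ≤ ‖y - x‖ + ‖x - z‖ := norm_sub_le_norm_sub_add_norm_sub y x z
    _ ≤ 1 := by linarith [norm_sub_rev x y ▸ h y hy]

theorem exists_mem_cDual_norm_sub_eq_one {A : Set (EuclideanSpace ℝ (Fin n))}
    {x : EuclideanSpace ℝ (Fin n)} (hA : A.Nonempty) (hx : x ∈ cHull A)
    (hxi : x ∉ interior (cHull A)) : ∃ y ∈ cDual A, ‖x - y‖ = 1 := by
  rcases (cDual A).eq_empty_or_nonempty with hempty | hne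
  · rw [cHull, hempty] at hxi
    simp [cDual] at hxi
  obtain ⟨y, hy, hmax⟩ := (isCompact_cDual hA).exists_isMaxOn hne
    (f := fun y => ‖x - y‖) (by fun_prop)
  refine ⟨y, hy, (norm_sub_rev x y ▸ hx y hy).antisymm (not_lt.1 fun hlt => hxi ?_)⟩
  exact interior_mono (ball_subset_cHull fun y' hy' => hmax hy')
    (mem_interior.2 ⟨_, subset_rfl, isOpen_ball, mem_ball_self (by linarith)⟩)

theorem cHull_subset_of_forall_frontier {K : Set (EuclideanSpace ℝ (Fin n))}
    (hne : K.Nonempty) (hcomp : IsCompact K) (hconv : Convex ℝ K)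
    (hsupp : ∀ x ∈ frontier K, ∃ y, K ⊆ closedBall y 1 ∧ ‖x - y‖ = 1) : cHull K ⊆ K := by
  intro z hz
  by_contra hzK
  obtain ⟨p, hpK, hproj⟩ :=
    exists_norm_eq_iInf_of_complete_convex hne hcomp.isClosed.isComplete hconv z
  have hinner : ∀ w ∈ K, ⟪z - p, w - p⟫ ≤ 0 :=
    (norm_eq_iInf_iff_real_inner_le_zero hconv hpK).1 hproj
  have hzp : z - p ≠ 0 := sub_ne_zero.2 fun h => hzK (h ▸ hpK)
  have hpfr : p ∈ frontier K :=
    ⟨subset_closure hpK, notMem_interior_of_forall_inner_sub_nonpos hzp hinner⟩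
  obtain ⟨y, hKy, hpy⟩ := hsupp p hpfr
  obtain ⟨y', hside, hpy', hcloser⟩ := exists_reflect_into_halfSpace (z - p) p y
  have hy' : y' ∈ cDual K := fun k hk =>
    (hcloser k (hinner k hk)).trans (mem_cDual_iff_subset_closedBall.2 hKy k hk)
  have hfar : ‖z - y'‖ ^ 2 = ‖z - p‖ ^ 2 + 2 * ⟪z - p, p - y'⟫ + 1 := by
    rw [← sub_add_sub_cancel z p y', norm_add_sq_real, hpy', hpy, one_pow]
  have hnear : ‖z - y'‖ ^ 2 ≤ 1 :=
    pow_le_one₀ (norm_nonneg _) (norm_sub_rev y' z ▸ hz y' hy')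
  have hzp_sq : 0 < ‖z - p‖ ^ 2 := by positivity
  linarith

end CDual

theorem stmt1_general (n : ℕ) (K : Set (EuclideanSpace ℝ (Fin n)))
    (hne : K.Nonempty) (hcomp : IsCompact K) :
    K = cHull K ↔
      Convex ℝ K ∧ ∀ x ∈ frontier K, ∃ y : EuclideanSpace ℝ (Fin n),
        K ⊆ closedBall y 1 ∧ ‖x - y‖ = 1 := by
  constructor
  · intro hK
    refine ⟨hK ▸ convex_cDual _, fun x hx => ?_⟩
    have hxK : x ∈ cHull K := hK ▸ hcomp.isClosed.frontier_subset hx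
    have hxi : x ∉ interior (cHull K) := hK ▸ hx.2
    obtain ⟨y, hy, hxy⟩ := exists_mem_cDual_norm_sub_eq_one hne hxK hxi
    exact ⟨y, mem_cDual_iff_subset_closedBall.1 hy, hxy⟩
  · rintro ⟨hconv, hsupp⟩
    exact (subset_cHull K).antisymm (cHull_subset_of_forall_frontier hne hcomp hconv hsupp)

/-- A nonempty compact `K ⊆ ℝⁿ` is a ball-body iff it is convex and every boundary point has
a supporting unit ball: some `y` with `K ⊆ B(y,1)` and `‖x - y‖ = 1`. -/
theorem stmt1 (n : ℕ) (hn : 1 ≤ n) (K : Set (EuclideanSpace ℝ (Fin n)))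
    (hne : K.Nonempty) (hcomp : IsCompact K) :
    K = cHull K ↔
      Convex ℝ K ∧ ∀ x ∈ frontier K, ∃ y : EuclideanSpace ℝ (Fin n),
        K ⊆ closedBall y 1 ∧ ‖x - y‖ = 1 :=
  stmt1_general n K hne hcomp
end
end

section
/- Let n ≥ 1 and let K ⊆ ℝⁿ be a nonempty compact convex set. Then K has constant width 1, i.e. h_K(u) + h_K(−u) = 1 for every unit vector u, if and only if K^c = K. -/
open Metric Set

noncomputable section

/-- The support function of a set: `h_K(u) = sup_{x ∈ K} ⟨x, u⟩`. -/
def suppFn {n : ℕ} (K : Set (EuclideanSpace ℝ (Fin n))) (u : EuclideanSpace ℝ (Fin n)) : ℝ :=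
  sSup ((fun x => (inner ℝ x u : ℝ)) '' K)

/-!
If `K` has constant width `1`, the width bound gives `‖p - q‖ ≤ 1` on `K`, i.e. `K ⊆ K^c`; a point
`y ∉ K` is strictly separated from `K` by a unit vector `u`, and the point of `K` extremal in
direction `-u` is then at distance `> 1` from `y`, so `y ∉ K^c`.

Conversely, if `K^c = K` then `K ⊆ K^c` bounds every width by `1`. For the other inequality let
`x ∈ K` maximise `⟪·, u⟫`; it suffices that `x - u ∈ K^c = K`. Otherwise some `p ∈ K` has
`‖p - (x - u)‖ > 1`. Then there is a unit circle through `x` and `p`, with centre `o`, such that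
`u` lies in the cone spanned by `x - o` and `p - o`. Every point within `1` of both `x` and `p` is
within `1` of `o + u`, so `o + u ∈ K^c = K`, yet `⟪o + u, u⟫ > ⟪x, u⟫`.
-/

open scoped RealInnerProductSpace

section Spindle

variable {E : Type*} [NormedAddCommGroup E] [InnerProductSpace ℝ E]

theorem closedBall_inter_closedBall_subset_closedBall {o x p z : E} {α β : ℝ}
    (hx : ‖x - o‖ = 1) (hp : ‖p - o‖ = 1) (hz : ‖z - o‖ = 1) (hα : 0 ≤ α) (hβ : 0 ≤ β)
    (hzxp : z - o = α • (x - o) + β • (p - o)) :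
    closedBall x 1 ∩ closedBall p 1 ⊆ closedBall z 1 := by
  rintro s ⟨hsx, hsp⟩
  rw [mem_closedBall, dist_eq_norm] at hsx hsp ⊢
  have hαβ : 1 ≤ α + β := by
    calc 1 = ‖α • (x - o) + β • (p - o)‖ := by rw [← hzxp, hz]
      _ ≤ ‖α • (x - o)‖ + ‖β • (p - o)‖ := norm_add_le _ _
      _ = α + β := by rw [norm_smul, norm_smul, hx, hp, Real.norm_of_nonneg hα,
          Real.norm_of_nonneg hβ, mul_one, mul_one]
  have hsq_le_inner : ∀ a : E, ‖a‖ = 1 → ‖s - o - a‖ ≤ 1 → ‖s - o‖ ^ 2 ≤ 2 * ⟪s - o, a⟫ := by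
    intro a ha hsa
    have := norm_sub_sq_real (s - o) a
    nlinarith [norm_nonneg (s - o - a)]
  have hx' := hsq_le_inner _ hx (by rwa [sub_sub_sub_cancel_right])
  have hp' := hsq_le_inner _ hp (by rwa [sub_sub_sub_cancel_right])
  have hsz : ‖s - z‖ ^ 2 ≤ 1 := by
    have hexp := norm_sub_sq_real (s - o) (z - o)
    rw [sub_sub_sub_cancel_right, hz, hzxp, inner_add_right, real_inner_smul_right,
      real_inner_smul_right] at hexp
    nlinarith [sq_nonneg ‖s - o‖]
  nlinarith [norm_nonneg (s - z)]

theorem exists_norm_smul_sub_eq_norm_smul_add {u v : E} (hu : ‖u‖ = 1) (hv : ‖v‖ < 2)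
    (hvu : ⟪v, u⟫ ≤ 0) (hfar : 1 < ‖v + u‖) :
    ∃ α β : ℝ, 0 ≤ α ∧ 0 ≤ β ∧ 0 < α + β ∧ ‖β • v - u‖ = α + β ∧ ‖α • v + u‖ = α + β := by
  set ℓ := ‖v‖ ^ 2 with hℓ
  set μ := ⟪v, u⟫ with hμ
  have hℓμ : 0 < ℓ + 2 * μ := by
    have := norm_add_sq_real v u
    nlinarith [norm_nonneg (v + u)]
  have hℓ0 : 0 < ℓ := by linarith
  have hℓ4 : ℓ < 4 := by nlinarith [norm_nonneg v]
  -- The two norm equations force `ℓ (α - β) = -2μ`; writing `α = s + m`, `β = s - m`,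
  -- both reduce to `(4 - ℓ) s² = 1 - ℓ m²`.
  set m := -μ / ℓ with hm
  have hmℓ : m * ℓ = -μ := div_mul_cancel₀ _ hℓ0.ne'
  have hm0 : 0 ≤ m := div_nonneg (by linarith) hℓ0.le
  have hm2 : 2 * m < 1 := by
    rw [hm, ← mul_div_assoc, div_lt_one hℓ0]; linarith
  set s := Real.sqrt ((1 - ℓ * m ^ 2) / (4 - ℓ))
  have hs : (4 - ℓ) * s ^ 2 = 1 - ℓ * m ^ 2 := by
    rw [Real.sq_sqrt (div_nonneg (by nlinarith) (by linarith)), mul_div_cancel₀ _ (by linarith)]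
  have hms : m < s := by
    rw [Real.lt_sqrt hm0, lt_div_iff₀ (by linarith)]
    nlinarith
  clear_value ℓ μ m s
  refine ⟨s + m, s - m, by linarith, by linarith, by linarith, ?_, ?_⟩
  · rw [← sq_eq_sq₀ (norm_nonneg _) (by linarith), norm_sub_sq_real, norm_smul,
      real_inner_smul_left, hu, mul_pow, Real.norm_eq_abs, sq_abs, ← hℓ, ← hμ]
    linear_combination (-1) * hs - 2 * (s - m) * hmℓ
  · rw [← sq_eq_sq₀ (norm_nonneg _) (by linarith), norm_add_sq_real, norm_smul,
      real_inner_smul_left, hu, mul_pow, Real.norm_eq_abs, sq_abs, ← hℓ, ← hμ]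
    linear_combination (-1) * hs + 2 * (s + m) * hmℓ

theorem exists_inner_lt_and_closedBall_inter_closedBall_subset {u x p : E} (hu : ‖u‖ = 1)
    (hpx : ‖p - x‖ < 2) (hpxu : ⟪p - x, u⟫ ≤ 0) (hfar : 1 < ‖p - (x - u)‖) :
    ∃ z, ⟪x, u⟫ < ⟪z, u⟫ ∧ closedBall x 1 ∩ closedBall p 1 ⊆ closedBall z 1 := by
  have hfar' : 1 < ‖p - x + u‖ := by rwa [sub_add]
  obtain ⟨α, β, hα, hβ, hr, hβn, hαn⟩ :=
    exists_norm_smul_sub_eq_norm_smul_add hu hpx hpxu hfar'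
  -- `o` is forced by `u = α • (x - o) + β • (p - o)`.
  set o := x + (α + β)⁻¹ • (β • (p - x) - u) with ho
  have hxo : x - o = (α + β)⁻¹ • (u - β • (p - x)) := by
    rw [ho]; module
  have hpo : p - o = (α + β)⁻¹ • (α • (p - x) + u) := by
    rw [ho]; match_scalars <;> field_simp <;> ring
  have hxo1 : ‖x - o‖ = 1 := by
    rw [hxo, norm_smul, norm_sub_rev, hβn, norm_inv, Real.norm_of_nonneg hr.le,
      inv_mul_cancel₀ hr.ne']
  have hpo1 : ‖p - o‖ = 1 := by
    rw [hpo, norm_smul, hαn, norm_inv, Real.norm_of_nonneg hr.le, inv_mul_cancel₀ hr.ne']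
  refine ⟨o + u, ?_, closedBall_inter_closedBall_subset_closedBall hxo1 hpo1 (z := o + u)
    (by rwa [add_sub_cancel_left]) hα hβ ?_⟩
  · have hne : x - o ≠ u := by
      intro h
      have hpo' : p - o = p - x + u := by rw [← h]; abel
      linarith [hpo' ▸ hpo1]
    have := (inner_lt_one_iff_real_of_norm_eq_one hxo1 hu).2 hne
    rw [inner_sub_left] at this
    rw [inner_add_left, real_inner_self_eq_norm_sq, hu]
    linarith
  · rw [add_sub_cancel_left, hxo, hpo]; match_scalars <;> field_simp <;> ring

end Spindle

theorem exists_norm_eq_one_inner_lt_of_notMem {E : Type*} [NormedAddCommGroup E]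
    [InnerProductSpace ℝ E] [CompleteSpace E] {K : Set E} {y : E} (hne : K.Nonempty)
    (hconv : Convex ℝ K) (hclosed : IsClosed K) (hy : y ∉ K) :
    ∃ u : E, ‖u‖ = 1 ∧ ∀ x ∈ K, ⟪x, u⟫ < ⟪y, u⟫ := by
  obtain ⟨f, c, hfK, hfy⟩ := geometric_hahn_banach_closed_point hconv hclosed hy
  obtain ⟨g, hg⟩ : ∃ g : E, ∀ z, ⟪z, g⟫ = f z := ⟨(InnerProductSpace.toDual ℝ E).symm f,
    fun z => by rw [real_inner_comm, InnerProductSpace.toDual_symm_apply]⟩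
  have hg0 : g ≠ 0 := by
    rintro rfl
    obtain ⟨x, hx⟩ := hne
    have := hfK x hx
    simp only [← hg, inner_zero_right] at this hfy
    linarith
  refine ⟨‖g‖⁻¹ • g, norm_smul_inv_norm hg0, fun x hx => ?_⟩
  rw [real_inner_smul_right, real_inner_smul_right, hg, hg]
  exact mul_lt_mul_of_pos_left ((hfK x hx).trans hfy) (inv_pos.2 (norm_pos_iff.2 hg0))

section SupportFunction

variable {n : ℕ} {K : Set (EuclideanSpace ℝ (Fin n))}

theorem IsCompact.exists_suppFn_eq_inner (hcomp : IsCompact K) (hne : K.Nonempty)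
    (u : EuclideanSpace ℝ (Fin n)) :
    ∃ x ∈ K, suppFn K u = ⟪x, u⟫ ∧ ∀ p ∈ K, ⟪p, u⟫ ≤ ⟪x, u⟫ :=
  hcomp.exists_sSup_image_eq_and_ge hne (continuous_id.inner continuous_const).continuousOn

theorem IsCompact.inner_le_suppFn (hcomp : IsCompact K) {p : EuclideanSpace ℝ (Fin n)}
    (hp : p ∈ K) (u : EuclideanSpace ℝ (Fin n)) : ⟪p, u⟫ ≤ suppFn K u :=
  le_csSup (hcomp.image (continuous_id.inner continuous_const)).bddAbove (mem_image_of_mem _ hp)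

theorem inner_sub_le_suppFn_add_suppFn_neg (hcomp : IsCompact K)
    {p q : EuclideanSpace ℝ (Fin n)} (hp : p ∈ K) (hq : q ∈ K) (u : EuclideanSpace ℝ (Fin n)) :
    ⟪p - q, u⟫ ≤ suppFn K u + suppFn K (-u) := by
  have := hcomp.inner_le_suppFn hq (-u)
  rw [inner_neg_right] at this
  rw [inner_sub_left]
  linarith [hcomp.inner_le_suppFn hp u]

theorem norm_sub_le_one_of_suppFn_add_suppFn_neg_le_one (hcomp : IsCompact K)
    (hwidth : ∀ u, ‖u‖ = 1 → suppFn K u + suppFn K (-u) ≤ 1)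
    {p q : EuclideanSpace ℝ (Fin n)} (hp : p ∈ K) (hq : q ∈ K) : ‖p - q‖ ≤ 1 := by
  rcases eq_or_ne p q with rfl | hpq
  · simp
  have hpq' : p - q ≠ 0 := sub_ne_zero.2 hpq
  calc ‖p - q‖ = ⟪p - q, ‖p - q‖⁻¹ • (p - q)⟫ := by
        rw [real_inner_smul_right, real_inner_self_eq_norm_sq, sq, inv_mul_cancel_left₀]
        exact norm_ne_zero_iff.2 hpq'
    _ ≤ suppFn K _ + suppFn K (-_) := inner_sub_le_suppFn_add_suppFn_neg hcomp hp hq _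
    _ ≤ 1 := hwidth _ (norm_smul_inv_norm hpq')

theorem suppFn_add_suppFn_neg_le_one_of_norm_sub_le_one (hne : K.Nonempty)
    (hcomp : IsCompact K) (hdiam : ∀ p ∈ K, ∀ q ∈ K, ‖p - q‖ ≤ 1) {u : EuclideanSpace ℝ (Fin n)}
    (hu : ‖u‖ = 1) :
    suppFn K u + suppFn K (-u) ≤ 1 := by
  obtain ⟨p, hp, hpu, -⟩ := hcomp.exists_suppFn_eq_inner hne u
  obtain ⟨q, hq, hqu, -⟩ := hcomp.exists_suppFn_eq_inner hne (-u)
  calc suppFn K u + suppFn K (-u) = ⟪p - q, u⟫ := by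
        rw [hpu, hqu, inner_neg_right, inner_sub_left, sub_eq_add_neg]
    _ ≤ ‖p - q‖ := by simpa [hu] using real_inner_le_norm (p - q) u
    _ ≤ 1 := hdiam p hp q hq

theorem cDual_subset_of_one_le_suppFn_add_suppFn_neg (hne : K.Nonempty)
    (hcomp : IsCompact K) (hconv : Convex ℝ K)
    (hwidth : ∀ u, ‖u‖ = 1 → 1 ≤ suppFn K u + suppFn K (-u)) :
    cDual K ⊆ K := by
  intro y hy
  by_contra hyK
  obtain ⟨u, hu, hsep⟩ := exists_norm_eq_one_inner_lt_of_notMem hne hconv hcomp.isClosed hyK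
  obtain ⟨p, hp, hpu, -⟩ := hcomp.exists_suppFn_eq_inner hne u
  obtain ⟨q, hq, hqu, -⟩ := hcomp.exists_suppFn_eq_inner hne (-u)
  refine lt_irrefl (1 : ℝ) ?_
  calc 1 ≤ suppFn K u + suppFn K (-u) := hwidth u hu
    _ = ⟪p, u⟫ - ⟪q, u⟫ := by rw [hpu, hqu, inner_neg_right, sub_eq_add_neg]
    _ < ⟪y, u⟫ - ⟪q, u⟫ := sub_lt_sub_right (hsep p hp) _
    _ = ⟪y - q, u⟫ := (inner_sub_left _ _ _).symm
    _ ≤ ‖y - q‖ := (real_inner_le_norm _ _).trans_eq (by rw [hu, mul_one])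
    _ ≤ 1 := by rw [norm_sub_rev]; exact hy q hq

theorem sub_mem_of_cDual_eq_self (hK : cDual K = K) {u x : EuclideanSpace ℝ (Fin n)}
    (hu : ‖u‖ = 1) (hx : x ∈ K) (hmax : ∀ p ∈ K, ⟪p, u⟫ ≤ ⟪x, u⟫) : x - u ∈ K := by
  have hdiam : ∀ p ∈ K, ∀ q ∈ K, ‖p - q‖ ≤ 1 := fun p hp q hq => hK.ge hq p hp
  by_contra hxu
  rw [← hK] at hxu
  obtain ⟨p, hp, hfar⟩ : ∃ p ∈ K, 1 < ‖p - (x - u)‖ := by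
    simpa [cDual] using hxu
  have hpxu : ⟪p - x, u⟫ ≤ 0 := by rw [inner_sub_left]; linarith [hmax p hp]
  obtain ⟨z, hxz, hball⟩ := exists_inner_lt_and_closedBall_inter_closedBall_subset hu
    ((hdiam p hp x hx).trans_lt one_lt_two) hpxu hfar
  have hzK : z ∈ cDual K := fun q hq => mem_closedBall_iff_norm.1 <|
    hball ⟨mem_closedBall_iff_norm.2 (hdiam q hq x hx), mem_closedBall_iff_norm.2 (hdiam q hq p hp)⟩
  exact (hxz.trans_le (hmax z (hK.le hzK))).false

theorem one_le_suppFn_add_suppFn_neg_of_cDual_eq_self (hne : K.Nonempty)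
    (hcomp : IsCompact K) (hK : cDual K = K) {u : EuclideanSpace ℝ (Fin n)} (hu : ‖u‖ = 1) :
    1 ≤ suppFn K u + suppFn K (-u) := by
  obtain ⟨x, hx, hsupp, hmax⟩ := hcomp.exists_suppFn_eq_inner hne u
  have := hcomp.inner_le_suppFn (sub_mem_of_cDual_eq_self hK hu hx hmax) (-u)
  rw [inner_neg_right, inner_sub_left, real_inner_self_eq_norm_sq, hu] at this
  linarith

end SupportFunction

theorem stmt3_general (n : ℕ) (K : Set (EuclideanSpace ℝ (Fin n)))
    (hne : K.Nonempty) (hcomp : IsCompact K) (hconv : Convex ℝ K) :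
    (∀ u : EuclideanSpace ℝ (Fin n), ‖u‖ = 1 → suppFn K u + suppFn K (-u) = 1) ↔
      cDual K = K := by
  constructor
  · intro hwidth
    refine Subset.antisymm
      (cDual_subset_of_one_le_suppFn_add_suppFn_neg hne hcomp hconv fun u hu => (hwidth u hu).ge)
      fun x hx p hp => ?_
    exact norm_sub_le_one_of_suppFn_add_suppFn_neg_le_one hcomp (fun u hu => (hwidth u hu).le)
      hp hx
  · intro hK u hu
    have hdiam : ∀ p ∈ K, ∀ q ∈ K, ‖p - q‖ ≤ 1 := fun p hp q hq => hK.ge hq p hp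
    exact le_antisymm (suppFn_add_suppFn_neg_le_one_of_norm_sub_le_one hne hcomp hdiam hu)
      (one_le_suppFn_add_suppFn_neg_of_cDual_eq_self hne hcomp hK hu)

/-- A nonempty compact convex `K ⊆ ℝⁿ` has constant width `1`
(`h_K(u) + h_K(-u) = 1` for all unit `u`) iff `K^c = K`. -/
theorem stmt3 (n : ℕ) (hn : 1 ≤ n) (K : Set (EuclideanSpace ℝ (Fin n)))
    (hne : K.Nonempty) (hcomp : IsCompact K) (hconv : Convex ℝ K) :
    (∀ u : EuclideanSpace ℝ (Fin n), ‖u‖ = 1 → suppFn K u + suppFn K (-u) = 1) ↔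
      cDual K = K :=
  stmt3_general n K hne hcomp hconv
end
end

section
/- Let n ≥ 1, let K, T ⊆ ℝⁿ be nonempty compact ball-bodies and let λ ∈ (0,1). Then the Minkowski combination (1−λ)·K + λ·T = {(1−λ)x + λy : x ∈ K, y ∈ T} is again a ball-body, and its c-dual satisfies ((1−λ)·K + λ·T)^c = (1−λ)·K^c + λ·T^c. -/
set_option maxHeartbeats 1000000

open Metric Set Pointwise RealInnerProductSpace

noncomputable section

namespace CDualAux

variable {n : ℕ}

lemma subset_cDual_cDual (A : Set (EuclideanSpace ℝ (Fin n))) : A ⊆ cDual (cDual A) :=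
  fun x hx z hz => by
    have := hz x hx
    rwa [norm_sub_rev]

lemma cDual_anti {A B : Set (EuclideanSpace ℝ (Fin n))} (h : A ⊆ B) : cDual B ⊆ cDual A :=
  fun y hy x hx => hy x (h hx)

lemma cDual_cDual_cDual (A : Set (EuclideanSpace ℝ (Fin n))) :
    cDual (cDual (cDual A)) = cDual A :=
  subset_antisymm (cDual_anti (subset_cDual_cDual A)) (subset_cDual_cDual (cDual A))

lemma cDual_isClosed (A : Set (EuclideanSpace ℝ (Fin n))) : IsClosed (cDual A) := by
  have h : cDual A = ⋂ x ∈ A, {y : EuclideanSpace ℝ (Fin n) | ‖x - y‖ ≤ 1} := by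
    ext y; simp [cDual, Set.mem_iInter]
  rw [h]
  exact isClosed_biInter fun x _ =>
    isClosed_le (Continuous.norm (continuous_const.sub continuous_id)) continuous_const

lemma cDual_isCompact {A : Set (EuclideanSpace ℝ (Fin n))} (hA : A.Nonempty) :
    IsCompact (cDual A) := by
  obtain ⟨x₀, hx₀⟩ := hA
  have hb : cDual A ⊆ Metric.closedBall x₀ 1 := fun y hy => by
    have := hy x₀ hx₀
    simpa [Metric.mem_closedBall, dist_eq_norm, norm_sub_rev] using this
  exact (isCompact_closedBall x₀ 1).of_isClosed_subset (cDual_isClosed A) hb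

lemma cDual_convex (A : Set (EuclideanSpace ℝ (Fin n))) : Convex ℝ (cDual A) := by
  intro y₁ h₁ y₂ h₂ a b ha hb hab x hx
  have e : x - (a • y₁ + b • y₂) = a • (x - y₁) + b • (x - y₂) := by
    have hx1 : a • x + b • x = x := by rw [← add_smul, hab, one_smul]
    rw [smul_sub, smul_sub]
    rw [show a • x - a • y₁ + (b • x - b • y₂) = (a • x + b • x) - (a • y₁ + b • y₂) by abel, hx1]
  calc ‖x - (a • y₁ + b • y₂)‖ = ‖a • (x - y₁) + b • (x - y₂)‖ := by rw [e]
    _ ≤ ‖a • (x - y₁)‖ + ‖b • (x - y₂)‖ := norm_add_le _ _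
    _ = a * ‖x - y₁‖ + b * ‖x - y₂‖ := by
        rw [norm_smul, norm_smul, Real.norm_eq_abs, Real.norm_eq_abs, abs_of_nonneg ha,
          abs_of_nonneg hb]
    _ ≤ a * 1 + b * 1 := by
        gcongr
        · exact h₁ x hx
        · exact h₂ x hx
    _ = 1 := by linarith

lemma cDual_nonempty (hn : 1 ≤ n) {K : Set (EuclideanSpace ℝ (Fin n))}
    (hKcomp : IsCompact K) (hKbb : K = cDual (cDual K)) : (cDual K).Nonempty := by
  by_contra h
  rw [Set.not_nonempty_iff_eq_empty] at h
  have huniv : cDual (cDual K) = Set.univ := by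
    rw [h]; ext y; simp [cDual]
  rw [huniv] at hKbb
  obtain ⟨r, hr⟩ := (hKbb ▸ hKcomp.isBounded).subset_closedBall 0
  have hp : (EuclideanSpace.single (⟨0, hn⟩ : Fin n) (|r| + 1) : EuclideanSpace ℝ (Fin n))
      ∈ Metric.closedBall (0 : EuclideanSpace ℝ (Fin n)) r := hr (Set.mem_univ _)
  rw [Metric.mem_closedBall, dist_zero_right, EuclideanSpace.norm_single] at hp
  have h1 : (0:ℝ) ≤ |r| + 1 := by positivity
  rw [Real.norm_eq_abs, abs_of_nonneg h1] at hp
  have := le_abs_self r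
  linarith

/-- Pure real arithmetic step. -/
lemma arith_step {d s t : ℝ} (hd0 : 0 ≤ d) (hd2 : d ≤ 2) (hs0 : 0 ≤ s) (hsd : s ≤ d)
    (ht0 : 0 < t) (ht12 : t ≤ 1 / 2)
    (hγts : 1 - Real.sqrt (1 - t * (1 - t) * d ^ 2) ≤ t * s) :
    d ^ 2 ≤ 2 * s + 4 * t := by
  have h1t : (0:ℝ) ≤ 1 - t := by linarith
  have h4 : d ^ 2 ≤ 4 := by nlinarith
  have htq : t * (1 - t) ≤ 1 / 4 := by nlinarith [sq_nonneg (1 - 2 * t)]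
  have hX0 : 0 ≤ 1 - t * (1 - t) * d ^ 2 := by nlinarith [mul_le_mul htq h4 (sq_nonneg d) (by norm_num : (0:ℝ) ≤ 1/4)]
  have h1ts : 0 ≤ 1 - t * s := by nlinarith
  have hsqge : 1 - t * s ≤ Real.sqrt (1 - t * (1 - t) * d ^ 2) := by linarith
  have hsq : (1 - t * s) ^ 2 ≤ 1 - t * (1 - t) * d ^ 2 := by
    have h := Real.sq_sqrt hX0
    nlinarith [hsqge, Real.sqrt_nonneg (1 - t * (1 - t) * d ^ 2)]
  have hdiv : (1 - t) * d ^ 2 ≤ 2 * s - t * s ^ 2 := by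
    have hmul : t * ((1 - t) * d ^ 2) ≤ t * (2 * s - t * s ^ 2) := by nlinarith
    exact le_of_mul_le_mul_left hmul ht0
  nlinarith

lemma exists_support {K : Set (EuclideanSpace ℝ (Fin n))} (hKne : K.Nonempty)
    (hcne : (cDual K).Nonempty) (u : EuclideanSpace ℝ (Fin n)) (hu : ‖u‖ = 1) :
    ∃ z ∈ cDual K, z + u ∈ cDual (cDual K) := by
  obtain ⟨x₀, hx₀⟩ := hKne
  have hcont : ContinuousOn (fun p : EuclideanSpace ℝ (Fin n) => (⟪u, p⟫ : ℝ)) (cDual K) :=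
    (continuous_const.inner continuous_id).continuousOn
  obtain ⟨z, hz, hmin⟩ := (cDual_isCompact ⟨x₀, hx₀⟩).exists_isMinOn hcne hcont
  have hmin' : ∀ q ∈ cDual K, ⟪u, z⟫ ≤ ⟪u, q⟫ := fun q hq => hmin hq
  refine ⟨z, hz, ?_⟩
  intro w hw
  -- goal : ‖w - (z + u)‖ ≤ 1
  set d : ℝ := ‖w - z‖ with hd
  set s : ℝ := (⟪u, w - z⟫ : ℝ) with hs
  clear_value d s
  have hd0 : 0 ≤ d := hd ▸ norm_nonneg _
  have hd2 : d ≤ 2 := by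
    have h1 : ‖x₀ - z‖ ≤ 1 := hz x₀ hx₀
    have h2 : ‖x₀ - w‖ ≤ 1 := hw x₀ hx₀
    calc d = ‖(x₀ - z) - (x₀ - w)‖ := by rw [hd]; congr 1; abel
      _ ≤ ‖x₀ - z‖ + ‖x₀ - w‖ := norm_sub_le _ _
      _ ≤ 2 := by linarith
  have hsplit : s = (⟪u, w⟫ : ℝ) - ⟪u, z⟫ := by rw [hs, inner_sub_right]
  have hs0 : 0 ≤ s := by
    have h := hmin' w hw
    rw [hsplit]; linarith
  have hsd : s ≤ d := by
    have h := real_inner_le_norm u (w - z)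
    rw [hu, one_mul] at h
    rw [hs, hd]; exact h
  have key : d ^ 2 ≤ 2 * s := by
    refine le_of_forall_pos_le_add fun ε hε => ?_
    obtain ⟨t, ht0, ht12, htε⟩ : ∃ t : ℝ, 0 < t ∧ t ≤ 1 / 2 ∧ t ≤ ε / 4 :=
      ⟨min (ε / 4) (1 / 2), lt_min (by linarith) (by norm_num), min_le_right _ _,
        min_le_left _ _⟩
    have h1t : (0:ℝ) ≤ 1 - t := by linarith
    have h4 : d ^ 2 ≤ 4 := by nlinarith
    have htq : t * (1 - t) ≤ 1 / 4 := by nlinarith [sq_nonneg (1 - 2 * t)]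
    have hX0 : 0 ≤ 1 - t * (1 - t) * d ^ 2 := by
      nlinarith [mul_le_mul htq h4 (sq_nonneg d) (by norm_num : (0:ℝ) ≤ 1/4)]
    set γ : ℝ := 1 - Real.sqrt (1 - t * (1 - t) * d ^ 2) with hγ
    have hsqrt1 : Real.sqrt (1 - t * (1 - t) * d ^ 2) ≤ 1 := by
      have h := Real.sqrt_le_sqrt (show 1 - t * (1 - t) * d ^ 2 ≤ 1 by
        nlinarith [mul_nonneg (mul_nonneg ht0.le h1t) (sq_nonneg d)])
      simpa using h
    have hγ0 : 0 ≤ γ := by rw [hγ]; linarith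
    clear_value γ
    set p : EuclideanSpace ℝ (Fin n) := z + t • (w - z) - γ • u with hp
    clear_value p
    have hpmem : p ∈ cDual K := by
      intro x hx
      have hxz : ‖x - z‖ ≤ 1 := hz x hx
      have hxw : ‖x - w‖ ≤ 1 := hw x hx
      have e : x - (z + t • (w - z)) = (1 - t) • (x - z) + t • (x - w) := by module
      have hcombo : ‖x - (z + t • (w - z))‖ ^ 2 ≤ 1 - t * (1 - t) * d ^ 2 := by
        rw [e]
        set A : ℝ := ‖x - z‖ with hA'
        set B : ℝ := ‖x - w‖ with hB'
        set ip : ℝ := (⟪x - z, x - w⟫ : ℝ) with hip'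
        have hA0 : 0 ≤ A := hA' ▸ norm_nonneg _
        have hB0 : 0 ≤ B := hB' ▸ norm_nonneg _
        have hA : A ^ 2 ≤ 1 := by nlinarith
        have hB : B ^ 2 ≤ 1 := by nlinarith
        have expand : ‖(1 - t) • (x - z) + t • (x - w)‖ ^ 2
            = (1 - t) ^ 2 * A ^ 2 + t ^ 2 * B ^ 2 + 2 * ((1 - t) * t * ip) := by
          rw [hA', hB', hip', norm_add_sq_real, norm_smul, norm_smul, real_inner_smul_left,
            real_inner_smul_right, Real.norm_eq_abs, Real.norm_eq_abs]
          rw [mul_pow, mul_pow, sq_abs, sq_abs]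
          ring
        have hip : d ^ 2 = A ^ 2 - 2 * ip + B ^ 2 := by
          have h := norm_sub_sq_real (x - z) (x - w)
          rw [show (x - z) - (x - w) = w - z by abel] at h
          rw [hd, hA', hB', hip']; exact h
        rw [expand]
        clear_value A B ip
        nlinarith [mul_nonneg h1t (sub_nonneg.2 hA), mul_nonneg ht0.le (sub_nonneg.2 hB), hip]
      have hxp : x - p = (x - (z + t • (w - z))) + γ • u := by rw [hp]; abel
      have hnorm1 : ‖x - (z + t • (w - z))‖ ≤ Real.sqrt (1 - t * (1 - t) * d ^ 2) := by
        rw [← Real.sqrt_sq (norm_nonneg (x - (z + t • (w - z))))]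
        exact Real.sqrt_le_sqrt hcombo
      calc ‖x - p‖ ≤ ‖x - (z + t • (w - z))‖ + ‖γ • u‖ := by rw [hxp]; exact norm_add_le _ _
        _ = ‖x - (z + t • (w - z))‖ + γ := by
            rw [norm_smul, hu, Real.norm_eq_abs, abs_of_nonneg hγ0, mul_one]
        _ ≤ Real.sqrt (1 - t * (1 - t) * d ^ 2) + γ := by linarith
        _ = 1 := by rw [hγ]; ring
    have hminp : (⟪u, z⟫ : ℝ) ≤ ⟪u, p⟫ := hmin' p hpmem
    have hip2 : (⟪u, p⟫ : ℝ) = ⟪u, z⟫ + t * s - γ := by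
      rw [hp]
      simp only [inner_sub_right, inner_add_right, real_inner_smul_right]
      rw [real_inner_self_eq_norm_sq, hu, hsplit]
      ring
    have hγts : γ ≤ t * s := by rw [hip2] at hminp; linarith
    have := arith_step hd0 hd2 hs0 hsd ht0 ht12 (hγ ▸ hγts)
    linarith
  have expand2 : ‖w - (z + u)‖ ^ 2 = d ^ 2 - 2 * s + 1 := by
    rw [show w - (z + u) = (w - z) - u by abel, norm_sub_sq_real, hu, real_inner_comm,
      ← hs, ← hd]
    ring
  have hle1 : ‖w - (z + u)‖ ^ 2 ≤ 1 := by rw [expand2]; linarith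
  nlinarith [norm_nonneg (w - (z + u))]

lemma smul_set_isCompact {c : ℝ} {A : Set (EuclideanSpace ℝ (Fin n))} (h : IsCompact A) :
    IsCompact (c • A) := by
  rw [← Set.image_smul]
  exact h.image (continuous_const_smul c)

lemma cDual_combo {K T : Set (EuclideanSpace ℝ (Fin n))}
    (hKne : K.Nonempty) (hKbb : K = cDual (cDual K))
    (hTne : T.Nonempty) (hTbb : T = cDual (cDual T))
    (hKcne : (cDual K).Nonempty) (hTcne : (cDual T).Nonempty)
    {lam : ℝ} (h0 : 0 < lam) (h1 : lam < 1) :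
    cDual ((1 - lam) • K + lam • T) = (1 - lam) • cDual K + lam • cDual T := by
  apply subset_antisymm
  · -- hard direction
    intro y hy
    by_contra hyP
    set P : Set (EuclideanSpace ℝ (Fin n)) := (1 - lam) • cDual K + lam • cDual T with hP
    have hPconv : Convex ℝ P := ((cDual_convex K).smul _).add ((cDual_convex T).smul _)
    have hPcomp : IsCompact P :=
      (smul_set_isCompact (cDual_isCompact hKne)).add (smul_set_isCompact (cDual_isCompact hTne))
    obtain ⟨f, c, hfP, hfy⟩ := geometric_hahn_banach_closed_point hPconv hPcomp.isClosed hyP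
    set w : EuclideanSpace ℝ (Fin n) :=
      (InnerProductSpace.toDual ℝ (EuclideanSpace ℝ (Fin n))).symm f with hwdef
    have hfw : ∀ v, (⟪w, v⟫ : ℝ) = f v := fun v => InnerProductSpace.toDual_symm_apply
    obtain ⟨zK0, hzK0⟩ := hKcne
    obtain ⟨zT0, hzT0⟩ := hTcne
    have hp₀ : (1 - lam) • zK0 + lam • zT0 ∈ P :=
      Set.add_mem_add (Set.smul_mem_smul_set hzK0) (Set.smul_mem_smul_set hzT0)
    have hw0 : w ≠ 0 := by
      intro h
      have hlt : f ((1 - lam) • zK0 + lam • zT0) < f y := lt_trans (hfP _ hp₀) hfy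
      rw [← hfw, ← hfw, h] at hlt
      simp at hlt
    set uh : EuclideanSpace ℝ (Fin n) := ‖w‖⁻¹ • w with huhdef
    have hwpos : (0:ℝ) < ‖w‖ := norm_pos_iff.2 hw0
    have huh : ‖uh‖ = 1 := by
      rw [huhdef, norm_smul, Real.norm_eq_abs, abs_of_nonneg (by positivity), inv_mul_cancel₀ hwpos.ne']
    have huhv : ∀ v, (⟪uh, v⟫ : ℝ) = ‖w‖⁻¹ * f v := fun v => by
      rw [huhdef, real_inner_smul_left, hfw]
    obtain ⟨z, hzK, hzx⟩ := exists_support hKne ⟨zK0, hzK0⟩ (-uh) (by rw [norm_neg, huh])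
    obtain ⟨ζ, hζT, hζt⟩ := exists_support hTne ⟨zT0, hzT0⟩ (-uh) (by rw [norm_neg, huh])
    rw [← hKbb] at hzx
    rw [← hTbb] at hζt
    have hmM : (1 - lam) • (z + -uh) + lam • (ζ + -uh) ∈ (1 - lam) • K + lam • T :=
      Set.add_mem_add (Set.smul_mem_smul_set hzx) (Set.smul_mem_smul_set hζt)
    have hpP : (1 - lam) • z + lam • ζ ∈ P :=
      Set.add_mem_add (Set.smul_mem_smul_set hzK) (Set.smul_mem_smul_set hζT)
    have hylen : ‖((1 - lam) • (z + -uh) + lam • (ζ + -uh)) - y‖ ≤ 1 := hy _ hmM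
    have hgap : (⟪uh, (1 - lam) • z + lam • ζ⟫ : ℝ) < ⟪uh, y⟫ := by
      rw [huhv, huhv]
      have ha := hfP _ hpP
      have hb := hfy
      have : f ((1 - lam) • z + lam • ζ) < f y := lt_trans ha hb
      exact mul_lt_mul_of_pos_left this (by positivity)
    have hinner : (⟪uh, y - ((1 - lam) • (z + -uh) + lam • (ζ + -uh))⟫ : ℝ)
        = ⟪uh, y⟫ - ⟪uh, (1 - lam) • z + lam • ζ⟫ + 1 := by
      have huu : (⟪uh, uh⟫ : ℝ) = 1 := by rw [real_inner_self_eq_norm_sq, huh]; norm_num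
      simp only [inner_sub_right, inner_add_right, real_inner_smul_right, inner_neg_right, huu]
      ring
    have hcs : (⟪uh, y - ((1 - lam) • (z + -uh) + lam • (ζ + -uh))⟫ : ℝ)
        ≤ ‖y - ((1 - lam) • (z + -uh) + lam • (ζ + -uh))‖ := by
      have h := real_inner_le_norm uh (y - ((1 - lam) • (z + -uh) + lam • (ζ + -uh)))
      rwa [huh, one_mul] at h
    rw [norm_sub_rev] at hylen
    rw [hinner] at hcs
    linarith
  · -- easy direction
    rintro p hp q hq
    rw [Set.mem_add] at hp hq
    obtain ⟨p₁, hp₁, p₂, hp₂, rfl⟩ := hp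
    obtain ⟨q₁, hq₁, q₂, hq₂, rfl⟩ := hq
    rw [Set.mem_smul_set] at hp₁ hp₂ hq₁ hq₂
    obtain ⟨zz, hz, rfl⟩ := hp₁
    obtain ⟨ζζ, hζ, rfl⟩ := hp₂
    obtain ⟨a, ha, rfl⟩ := hq₁
    obtain ⟨b, hb, rfl⟩ := hq₂
    have e : ((1 - lam) • a + lam • b) - ((1 - lam) • zz + lam • ζζ)
        = (1 - lam) • (a - zz) + lam • (b - ζζ) := by module
    rw [e]
    have h1' : ‖a - zz‖ ≤ 1 := hz a ha
    have h2' : ‖b - ζζ‖ ≤ 1 := hζ b hb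
    calc ‖(1 - lam) • (a - zz) + lam • (b - ζζ)‖
        ≤ ‖(1 - lam) • (a - zz)‖ + ‖lam • (b - ζζ)‖ := norm_add_le _ _
      _ = (1 - lam) * ‖a - zz‖ + lam * ‖b - ζζ‖ := by
          rw [norm_smul, norm_smul, Real.norm_eq_abs, Real.norm_eq_abs,
            abs_of_nonneg (by linarith), abs_of_nonneg h0.le]
      _ ≤ (1 - lam) * 1 + lam * 1 := by gcongr <;> linarith
      _ = 1 := by ring

end CDualAux

/-- The `c`-duality is linear with respect to Minkowski averages of ball-bodies:
`(1-λ)K + λT` is a ball-body and `((1-λ)K + λT)^c = (1-λ)K^c + λT^c`. -/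
theorem stmt5 (n : ℕ) (hn : 1 ≤ n) (K T : Set (EuclideanSpace ℝ (Fin n)))
    (hKne : K.Nonempty) (hKcomp : IsCompact K) (hKbb : K = cDual (cDual K))
    (hTne : T.Nonempty) (hTcomp : IsCompact T) (hTbb : T = cDual (cDual T))
    (lam : ℝ) (hlam : lam ∈ Set.Ioo (0 : ℝ) 1) :
    ((1 - lam) • K + lam • T) = cDual (cDual ((1 - lam) • K + lam • T)) ∧
      cDual ((1 - lam) • K + lam • T) = (1 - lam) • cDual K + lam • cDual T := by
  obtain ⟨h0, h1⟩ := hlam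
  have hKcne : (cDual K).Nonempty := CDualAux.cDual_nonempty hn hKcomp hKbb
  have hTcne : (cDual T).Nonempty := CDualAux.cDual_nonempty hn hTcomp hTbb
  have part2 := CDualAux.cDual_combo hKne hKbb hTne hTbb hKcne hTcne h0 h1
  refine ⟨?_, part2⟩
  rw [part2]
  have hKc_bb : cDual K = cDual (cDual (cDual K)) := (CDualAux.cDual_cDual_cDual K).symm
  have hTc_bb : cDual T = cDual (cDual (cDual T)) := (CDualAux.cDual_cDual_cDual T).symm
  have hKccne : (cDual (cDual K)).Nonempty := hKbb ▸ hKne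
  have hTccne : (cDual (cDual T)).Nonempty := hTbb ▸ hTne
  have h := CDualAux.cDual_combo hKcne hKc_bb hTcne hTc_bb hKccne hTccne h0 h1
  rw [h, ← hKbb, ← hTbb]
end
end

section
/- Let n ≥ 1, let K ⊆ ℝⁿ be a nonempty compact ball-body, let x be a point in the topological boundary of K, and let u be a unit vector which is an outer normal to K at x, i.e. ⟨z − x, u⟩ ≤ 0 for all z ∈ K. Then K ⊆ B(x − u, 1), so y := x − u lies in K^c; moreover −u is an outer normal to K^c at y, i.e. ⟨w − y, −u⟩ ≤ 0 for all w ∈ K^c. -/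
open Metric Set

noncomputable section

/-!
Suppose some `z ∈ K` lies outside `B(x - u, 1)` and put `w = z - x`. By the identity
`‖c - t w‖² = (1 - t)‖c‖² + t‖c - w‖² - t(1 - t)‖w‖²`, every `c` in the lens
`B(0, 1) ∩ B(w, 1)` is within `1 - t(1 - t)‖w‖²/2` of `t w`, so the point
`p = t w + (t(1 - t)‖w‖²/2) u` is within `1` of the whole lens. As `K = K^cc` and
`x, z ∈ K`, this puts `x + p` in `K`. Since `‖w + u‖ > 1` and `⟪w, u⟫ ≤ 0`, a suitable
`t ∈ (0, 1]` gives `⟪p, u⟫ > 0`, contradicting that `u` is an outer normal at `x`.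
The normal property of `-u` at `x - u` is Cauchy–Schwarz, since `K^c ⊆ B(x, 1)`.
-/

section InnerProductSpace

variable {E : Type*} [NormedAddCommGroup E] [InnerProductSpace ℝ E]

theorem norm_sub_smul_sq (c w : E) (t : ℝ) :
    ‖c - t • w‖ ^ 2 = (1 - t) * ‖c‖ ^ 2 + t * ‖c - w‖ ^ 2 - t * (1 - t) * ‖w‖ ^ 2 := by
  rw [norm_sub_sq_real, norm_sub_sq_real, real_inner_smul_right, norm_smul, mul_pow,
    Real.norm_eq_abs, sq_abs]
  ring

theorem norm_smul_add_smul_sub_le_one {w u c : E} {t : ℝ} (ht₀ : 0 ≤ t) (ht₁ : t ≤ 1)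
    (hu : ‖u‖ ≤ 1) (hc : ‖c‖ ≤ 1) (hcw : ‖c - w‖ ≤ 1) :
    ‖t • w + (t * (1 - t) * ‖w‖ ^ 2 / 2) • u - c‖ ≤ 1 := by
  set D := t * (1 - t) * ‖w‖ ^ 2
  have hD : 0 ≤ D := mul_nonneg (mul_nonneg ht₀ (sub_nonneg.2 ht₁)) (sq_nonneg _)
  have hsq : ‖c - t • w‖ ^ 2 ≤ 1 - D := by
    rw [norm_sub_smul_sq]
    have h₁ : (1 - t) * ‖c‖ ^ 2 ≤ 1 - t :=
      mul_le_of_le_one_right (by linarith) (pow_le_one₀ (norm_nonneg _) hc)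
    have h₂ : t * ‖c - w‖ ^ 2 ≤ t := mul_le_of_le_one_right ht₀ (pow_le_one₀ (norm_nonneg _) hcw)
    linarith
  -- `√(1 - D) ≤ 1 - D / 2`
  have hnear : ‖c - t • w‖ ≤ 1 - D / 2 := by
    have hD₁ : D ≤ 1 := by nlinarith [sq_nonneg ‖c - t • w‖]
    exact le_of_sq_le_sq (by nlinarith) (by linarith)
  calc ‖t • w + (D / 2) • u - c‖ ≤ ‖c - t • w‖ + ‖(D / 2) • u‖ := by
        rw [norm_sub_rev c]
        exact (congrArg norm (by abel)).trans_le (norm_add_le _ _)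
    _ ≤ (1 - D / 2) + D / 2 := by
        rw [norm_smul, Real.norm_of_nonneg (by positivity)]
        gcongr
        exact mul_le_of_le_one_right (by positivity) hu
    _ = 1 := by ring

theorem exists_inner_pos_forall_norm_sub_le_one {w u : E} (hu : ‖u‖ = 1)
    (hwu : inner ℝ w u ≤ 0) (h : 1 < ‖w + u‖) :
    ∃ p : E, 0 < inner ℝ p u ∧ ∀ c : E, ‖c‖ ≤ 1 → ‖c - w‖ ≤ 1 → ‖p - c‖ ≤ 1 := by
  set b := inner ℝ w u
  set m := ‖w‖ ^ 2
  have hmb : 0 < m + 2 * b := by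
    have : ‖w + u‖ ^ 2 = m + 2 * b + 1 := by rw [norm_add_sq_real, hu]; ring
    nlinarith [norm_nonneg (w + u)]
  have hm : 0 < m := by linarith
  set t := (m + 2 * b) / (2 * m)
  have ht₀ : 0 < t := by positivity
  have ht₁ : t ≤ 1 := by rw [div_le_one (by positivity)]; linarith
  refine ⟨t • w + (t * (1 - t) * m / 2) • u, ?_,
    fun c hc hcw => norm_smul_add_smul_sub_le_one ht₀.le ht₁ hu.le hc hcw⟩
  have hinner : inner ℝ (t • w + (t * (1 - t) * m / 2) • u) u = t * (m + 2 * b) / 4 := by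
    rw [inner_add_left, real_inner_smul_left, real_inner_smul_left, real_inner_self_eq_norm_sq,
      hu]
    simp only [t]
    field_simp
    ring
  rw [hinner]
  positivity

theorem inner_sub_sub_neg_nonpos {w x u : E} (hwx : ‖w - x‖ ≤ 1) (hu : ‖u‖ = 1) :
    inner ℝ (w - (x - u)) (-u) ≤ 0 := by
  have hexpand : inner ℝ (w - (x - u)) (-u) = inner ℝ (x - w) u - 1 := by
    simp only [inner_neg_right, inner_sub_left, real_inner_self_eq_norm_sq, hu]
    ring
  have hle := real_inner_le_norm (x - w) u
  rw [hu, mul_one, norm_sub_rev] at hle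
  linarith

end InnerProductSpace

variable {n : ℕ}

theorem isClosed_cDual (A : Set (EuclideanSpace ℝ (Fin n))) : IsClosed (cDual A) := by
  have : cDual A = ⋂ x ∈ A, closedBall x 1 := by
    ext y
    simp [cDual, dist_eq_norm, norm_sub_rev y]
  rw [this]
  exact isClosed_biInter fun x _ => isClosed_closedBall

theorem subset_closedBall_sub_of_inner_nonpos {K : Set (EuclideanSpace ℝ (Fin n))}
    (hbb : K = cDual (cDual K)) {x u : EuclideanSpace ℝ (Fin n)} (hxK : x ∈ K) (hu : ‖u‖ = 1)
    (hnormal : ∀ z ∈ K, inner ℝ (z - x) u ≤ 0) : K ⊆ closedBall (x - u) 1 := by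
  intro z hz
  by_contra hfar
  have hgt : 1 < ‖(z - x) + u‖ := by
    rw [mem_closedBall, dist_eq_norm, not_le] at hfar
    rwa [sub_add]
  obtain ⟨p, hpu, hp⟩ := exists_inner_pos_forall_norm_sub_le_one hu (hnormal z hz) hgt
  have hxp : x + p ∈ K := by
    rw [hbb]
    intro y hy
    have h := hp (y - x) (by rw [norm_sub_rev]; exact hy x hxK)
      (by rw [sub_sub_sub_cancel_right, norm_sub_rev]; exact hy z hz)
    rw [norm_sub_rev] at h
    rwa [← sub_sub]
  have hbehind := hnormal (x + p) hxp
  rw [add_sub_cancel_left] at hbehind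
  linarith

theorem stmt7_general (n : ℕ) (K : Set (EuclideanSpace ℝ (Fin n)))
    (hbb : K = cDual (cDual K))
    (x u : EuclideanSpace ℝ (Fin n)) (hx : x ∈ frontier K) (hu : ‖u‖ = 1)
    (hnormal : ∀ z ∈ K, (inner ℝ (z - x) u : ℝ) ≤ 0) :
    K ⊆ closedBall (x - u) 1 ∧ (x - u) ∈ cDual K ∧
      ∀ w ∈ cDual K, (inner ℝ (w - (x - u)) (-u) : ℝ) ≤ 0 := by
  have hxK : x ∈ K := (show IsClosed K from hbb ▸ isClosed_cDual _).frontier_subset hx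
  have hball := subset_closedBall_sub_of_inner_nonpos hbb hxK hu hnormal
  refine ⟨hball, fun z hz => ?_, fun w hw => inner_sub_sub_neg_nonpos ?_ hu⟩
  · simpa [dist_eq_norm] using hball hz
  · rw [norm_sub_rev]; exact hw x hxK

/-- If `u` is an outer unit normal to a nonempty compact ball-body `K` at a boundary point
`x`, then `K ⊆ B(x - u, 1)` (so `x - u ∈ K^c`) and `-u` is an outer normal to `K^c` at
`x - u`. -/
theorem stmt7 (n : ℕ) (hn : 1 ≤ n) (K : Set (EuclideanSpace ℝ (Fin n)))
    (hne : K.Nonempty) (hcomp : IsCompact K) (hbb : K = cDual (cDual K))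
    (x u : EuclideanSpace ℝ (Fin n)) (hx : x ∈ frontier K) (hu : ‖u‖ = 1)
    (hnormal : ∀ z ∈ K, (inner ℝ (z - x) u : ℝ) ≤ 0) :
    K ⊆ closedBall (x - u) 1 ∧ (x - u) ∈ cDual K ∧
      ∀ w ∈ cDual K, (inner ℝ (w - (x - u)) (-u) : ℝ) ≤ 0 :=
  stmt7_general n K hbb x u hx hu hnormal
end
end

section
/- Let n ≥ 1 and let A ⊆ ℝⁿ be a nonempty bounded set which is contained in some closed ball of radius 1. Then the diameter of its c-hull satisfies diam(conv_c(A)) ≤ √(2n/(n+1)) · diam(A). -/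
/-!
Let `B(z, r)` be a smallest closed ball containing `closure A`; then `r ≤ 1`. Every point of
`B(z, 1 - r)` is within distance `1` of `A`, so `conv_c(A) ⊆ B(z, 1 - r)^c = B(z, r)` and
`diam conv_c(A) ≤ 2r`. It remains to prove Jung's bound `2r² ≤ diam(A)² · n/(n+1)`.

By minimality, `z` lies in the closed convex hull of the contact points `closure A ∩ ∂B(z, r)`:
otherwise a separating functional gives a direction in which moving `z` shrinks the ball. For a
convex combination `c = ∑ wᵢ pᵢ` of contact points, which by Carathéodory can be taken over
`k ≤ n + 1` affinely independent points,
`2 (r² - ‖c - z‖²) = ∑ᵢⱼ wᵢ wⱼ ‖pᵢ - pⱼ‖² ≤ d² (1 - ∑ wᵢ²) ≤ d² (1 - 1/k)`,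
where `d = diam A`; letting `c → z` gives the bound.
-/

open Metric Set

noncomputable section

open Module RealInnerProductSpace

def IsMinimalEnclosingBall {X : Type*} [PseudoMetricSpace X] (K : Set X) (z : X) (r : ℝ) :
    Prop :=
  K ⊆ closedBall z r ∧ ∀ w s, K ⊆ closedBall w s → r ≤ s

theorem IsCompact.exists_isMinimalEnclosingBall {X : Type*} [PseudoMetricSpace X] [ProperSpace X]
    {K : Set X} (hK : IsCompact K) (hne : K.Nonempty) : ∃ z r, IsMinimalEnclosingBall K z r := by
  set F : X → ℝ := fun w => sSup ((fun a => dist a w) '' K)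
  have hF : Continuous F := hK.continuous_sSup (f := fun w a => dist a w) (by fun_prop)
  have hbdd : ∀ w, BddAbove ((fun a => dist a w) '' K) := fun w =>
    (hK.image (continuous_id.dist continuous_const)).bddAbove
  obtain ⟨a₀, ha₀⟩ := hne
  have hdist_le : ∀ w, dist a₀ w ≤ F w := fun w => le_csSup (hbdd w) (mem_image_of_mem _ ha₀)
  obtain ⟨z, hz⟩ := hF.exists_forall_le' a₀ <|
    ((tendsto_dist_left_cocompact_atTop a₀).eventually_ge_atTop (F a₀)).mono fun w hw =>
      hw.trans (dist_comm a₀ w ▸ hdist_le w)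
  refine ⟨z, F z, fun a ha => le_csSup (hbdd z) (mem_image_of_mem _ ha), fun w s hs => ?_⟩
  exact (hz w).trans <| csSup_le (Set.Nonempty.image _ ⟨a₀, ha₀⟩) <| by
    rintro _ ⟨a, ha, rfl⟩
    exact hs ha

variable {E : Type*} [NormedAddCommGroup E] [InnerProductSpace ℝ E]

theorem IsMinimalEnclosingBall.mem_closure_convexHull_inter_sphere [ProperSpace E] {K : Set E}
    {z : E} {r : ℝ} (hK : IsCompact K) (h : IsMinimalEnclosingBall K z r) :
    z ∈ closure (convexHull ℝ (K ∩ sphere z r)) := by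
  by_contra hz
  obtain ⟨f, u, hfu, huz⟩ :=
    geometric_hahn_banach_closed_point (convex_convexHull ℝ _).closure isClosed_closure hz
  set v := (InnerProductSpace.toDual ℝ E).symm f
  have hv : ∀ x, ⟪v, x⟫ = f x := fun x => InnerProductSpace.toDual_symm_apply
  have hfar : K ∩ {a | u ≤ f a} ⊆ ball z r := by
    rintro a ⟨haK, hau⟩
    exact (h.1 haK).lt_of_ne fun har =>
      hau.not_gt (hfu a (subset_closure (subset_convexHull ℝ _ ⟨haK, har⟩)))
  obtain ⟨ρ, hρ, hρball⟩ :=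
    exists_lt_subset_ball (hK.isClosed.inter (isClosed_le continuous_const f.continuous)) hfar
  obtain ⟨t, ht, htv⟩ :=
    exists_pos_mul_lt (lt_min (sub_pos.2 hρ) (mul_pos two_pos (sub_pos.2 huz))) (‖v‖ + ‖v‖ ^ 2)
  have htv₁ : t * ‖v‖ < r - ρ := by nlinarith [min_le_left (r - ρ) (2 * (f z - u)), sq_nonneg ‖v‖]
  have htv₂ : t * ‖v‖ ^ 2 < 2 * (f z - u) := by
    nlinarith [min_le_right (r - ρ) (2 * (f z - u)), norm_nonneg v]
  have hshift : K ⊆ ball (z - t • v) r := by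
    intro a ha
    have hr : 0 ≤ r := dist_nonneg.trans (h.1 ha)
    rw [mem_ball, dist_eq_norm, sub_sub_eq_add_sub, add_sub_right_comm]
    by_cases hau : u ≤ f a
    · calc ‖a - z + t • v‖ ≤ ‖a - z‖ + t * ‖v‖ :=
          (norm_add_le _ _).trans_eq (by rw [norm_smul, Real.norm_of_nonneg ht.le])
        _ < ρ + (r - ρ) := add_lt_add (mem_ball_iff_norm.1 (hρball ⟨ha, hau⟩)) htv₁
        _ = r := by ring
    · have haz : ‖a - z‖ ≤ r := mem_closedBall_iff_norm.1 (h.1 ha)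
      have hinner : ⟪a - z, v⟫ = f a - f z := by rw [real_inner_comm, inner_sub_right, hv, hv]
      refine lt_of_pow_lt_pow_left₀ 2 hr ?_
      rw [norm_add_sq_real, real_inner_smul_right, hinner, norm_smul, Real.norm_eq_abs,
        abs_of_pos ht]
      nlinarith [pow_le_pow_left₀ (norm_nonneg (a - z)) haz 2]
  obtain ⟨s, hs, hKs⟩ := exists_lt_subset_ball hK.isClosed hshift
  exact hs.not_ge (h.2 _ _ (hKs.trans ball_subset_closedBall))

theorem sum_sum_mul_norm_sub_sq {ι : Type*} [Fintype ι] {w : ι → ℝ} (hw : ∑ i, w i = 1)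
    (p : ι → E) (z : E) :
    ∑ i, ∑ j, w i * w j * ‖p i - p j‖ ^ 2 =
      2 * (∑ i, w i * ‖p i - z‖ ^ 2 - ‖∑ i, w i • p i - z‖ ^ 2) := by
  have hcentre : ∑ i, w i • p i - z = ∑ i, w i • (p i - z) := by
    simp only [smul_sub, Finset.sum_sub_distrib, ← Finset.sum_smul, hw, one_smul]
  have hexpand : ∀ i j, ‖p i - p j‖ ^ 2 =
      ‖p i - z‖ ^ 2 - 2 * ⟪p i - z, p j - z⟫ + ‖p j - z‖ ^ 2 := fun i j => by
    rw [← norm_sub_sq_real, sub_sub_sub_cancel_right]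
  have hnorm : ‖∑ i, w i • (p i - z)‖ ^ 2 = ∑ i, ∑ j, w i * w j * ⟪p i - z, p j - z⟫ := by
    simp only [← real_inner_self_eq_norm_sq, sum_inner, inner_sum, real_inner_smul_left,
      real_inner_smul_right, mul_assoc]
    exact Finset.sum_congr rfl fun i _ => Finset.sum_congr rfl fun j _ => by rw [real_inner_comm]
  simp only [hcentre, hnorm, hexpand, mul_add, mul_sub, Finset.sum_add_distrib,
    Finset.sum_sub_distrib, mul_assoc, mul_left_comm _ (2 : ℝ), ← Finset.sum_mul,
    ← Finset.mul_sum, hw, one_mul]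
  ring

theorem sum_sum_mul_dist_sq_le {X ι : Type*} [PseudoMetricSpace X] [Fintype ι] {w : ι → ℝ}
    (hw₀ : ∀ i, 0 ≤ w i) (hw : ∑ i, w i = 1) {p : ι → X} {d : ℝ}
    (hd : ∀ i j, dist (p i) (p j) ≤ d) :
    ∑ i, ∑ j, w i * w j * dist (p i) (p j) ^ 2 ≤ d ^ 2 * (1 - ∑ i, w i ^ 2) := by
  classical
  calc ∑ i, ∑ j, w i * w j * dist (p i) (p j) ^ 2
      ≤ ∑ i, ∑ j, (d ^ 2 * (w i * w j) - if i = j then d ^ 2 * w i ^ 2 else 0) := by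
        gcongr with i _ j _
        split_ifs with hij
        · subst hij; simp [sq]
        · rw [sub_zero, mul_comm]
          exact mul_le_mul_of_nonneg_right (pow_le_pow_left₀ dist_nonneg (hd i j) 2)
            (mul_nonneg (hw₀ i) (hw₀ j))
    _ = d ^ 2 * (1 - ∑ i, w i ^ 2) := by
        simp only [Finset.sum_sub_distrib, Finset.sum_ite_eq, Finset.mem_univ, if_true,
          ← Finset.mul_sum, ← Finset.sum_mul, hw]
        ring

theorem one_div_card_le_sum_sq {ι : Type*} [Fintype ι] {w : ι → ℝ} (hw : ∑ i, w i = 1) :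
    1 / Fintype.card ι ≤ ∑ i, w i ^ 2 := by
  refine div_le_of_le_mul₀ (Nat.cast_nonneg _) (by positivity) ?_
  simpa [hw, mul_comm] using sq_sum_le_card_mul_sum_sq (s := Finset.univ) (f := w)

theorem two_mul_sq_sub_norm_sq_le_of_mem_convexHull [FiniteDimensional ℝ E] {S : Set E} {z c : E}
    {r d : ℝ} (hS : S ⊆ sphere z r) (hd : ∀ x ∈ S, ∀ y ∈ S, dist x y ≤ d)
    (hc : c ∈ convexHull ℝ S) :
    2 * (r ^ 2 - ‖c - z‖ ^ 2) ≤ d ^ 2 * (finrank ℝ E / (finrank ℝ E + 1)) := by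
  obtain ⟨ι, _, p, w, hpS, hind, hw₀, hw, rfl⟩ := eq_pos_convex_span_of_mem_convexHull hc
  have hpz : ∀ i, ‖p i - z‖ = r := fun i => mem_sphere_iff_norm.1 (hS (hpS ⟨i, rfl⟩))
  have hcard : (Fintype.card ι : ℝ) ≤ finrank ℝ E + 1 := by
    exact_mod_cast hind.card_le_finrank_succ.trans (Nat.succ_le_succ (Submodule.finrank_le _))
  have hι : (0 : ℝ) < Fintype.card ι := by
    rw [← Finset.card_univ]
    exact_mod_cast Finset.card_pos.2 (Finset.nonempty_of_sum_ne_zero (hw ▸ one_ne_zero))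
  calc 2 * (r ^ 2 - ‖∑ i, w i • p i - z‖ ^ 2)
      = ∑ i, ∑ j, w i * w j * ‖p i - p j‖ ^ 2 := by
        rw [sum_sum_mul_norm_sub_sq hw p z]
        simp only [hpz, ← Finset.sum_mul, hw, one_mul]
    _ ≤ d ^ 2 * (1 - ∑ i, w i ^ 2) := by
        simp only [← dist_eq_norm]
        exact sum_sum_mul_dist_sq_le (fun i => (hw₀ i).le) hw fun i j =>
          hd _ (hpS ⟨i, rfl⟩) _ (hpS ⟨j, rfl⟩)
    _ ≤ d ^ 2 * (1 - 1 / (finrank ℝ E + 1)) := by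
        gcongr
        exact (one_div_le_one_div_of_le hι hcard).trans (one_div_card_le_sum_sq hw)
    _ = d ^ 2 * (finrank ℝ E / (finrank ℝ E + 1)) := by
        field_simp
        ring

/-- **Jung's theorem**. -/
theorem IsMinimalEnclosingBall.two_mul_le_sqrt_mul_diam [FiniteDimensional ℝ E] {K : Set E}
    {z : E} {r : ℝ} (hK : IsCompact K) (h : IsMinimalEnclosingBall K z r) :
    2 * r ≤ √(2 * finrank ℝ E / (finrank ℝ E + 1)) * diam K := by
  set n : ℝ := (finrank ℝ E : ℝ)
  set T := {c : E | 2 * (r ^ 2 - ‖c - z‖ ^ 2) ≤ diam K ^ 2 * (n / (n + 1))}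
  have hT : closure (convexHull ℝ (K ∩ sphere z r)) ⊆ T :=
    closure_minimal (fun c hc => two_mul_sq_sub_norm_sq_le_of_mem_convexHull inter_subset_right
      (fun x hx y hy => dist_le_diam_of_mem hK.isBounded hx.1 hy.1) hc)
      (isClosed_le (by fun_prop) continuous_const)
  have hsq : 2 * r ^ 2 ≤ diam K ^ 2 * (n / (n + 1)) := by
    simpa [T] using hT (h.mem_closure_convexHull_inter_sphere hK)
  calc 2 * r ≤ |2 * r| := le_abs_self _
    _ ≤ √(2 * n / (n + 1) * diam K ^ 2) := Real.abs_le_sqrt (by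
      rw [show 2 * n / (n + 1) * diam K ^ 2 = 2 * (diam K ^ 2 * (n / (n + 1))) by ring]
      linarith)
    _ = √(2 * n / (n + 1)) * diam K := by
      rw [Real.sqrt_mul' _ (sq_nonneg _), Real.sqrt_sq diam_nonneg]

section cHull

variable {n : ℕ} {A B : Set (EuclideanSpace ℝ (Fin n))} {z : EuclideanSpace ℝ (Fin n)} {r : ℝ}

theorem cDual_anti (h : A ⊆ B) : cDual B ⊆ cDual A := fun _ hy x hx => hy x (h hx)

theorem closedBall_subset_cDual (hA : A ⊆ closedBall z r) : closedBall z (1 - r) ⊆ cDual A :=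
  fun y hy x hx => calc
    ‖x - y‖ = dist x y := (dist_eq_norm x y).symm
    _ ≤ dist x z + dist z y := dist_triangle x z y
    _ ≤ r + (1 - r) := add_le_add (hA hx) (dist_comm y z ▸ hy)
    _ = 1 := by ring

theorem cDual_closedBall_subset (hr₀ : 0 ≤ r) (hr₁ : r ≤ 1) :
    cDual (closedBall z r) ⊆ closedBall z (1 - r) := by
  intro u hu
  rw [mem_closedBall_iff_norm']
  rcases eq_or_ne u z with rfl | huz
  · simpa using hr₁
  have hzu : 0 < ‖z - u‖ := norm_pos_iff.2 (sub_ne_zero.2 huz.symm)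
  set x := z + (r / ‖z - u‖) • (z - u)
  have hx : x ∈ closedBall z r := by
    rw [mem_closedBall_iff_norm, add_sub_cancel_left, norm_smul, Real.norm_of_nonneg
      (div_nonneg hr₀ hzu.le), div_mul_cancel₀ _ hzu.ne']
  have hxu : ‖x - u‖ = ‖z - u‖ + r := by
    rw [show x - u = (1 + r / ‖z - u‖) • (z - u) by simp only [x]; module, norm_smul,
      Real.norm_of_nonneg (by positivity), add_mul, one_mul, div_mul_cancel₀ _ hzu.ne']
  linarith [hu x hx]

theorem cHull_subset_closedBall (hA : A ⊆ closedBall z r) (hr₀ : 0 ≤ r) (hr₁ : r ≤ 1) :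
    cHull A ⊆ closedBall z r := by
  have h := (cDual_anti (closedBall_subset_cDual hA)).trans
    (cDual_closedBall_subset (z := z) (sub_nonneg.2 hr₁) (sub_le_self 1 hr₀))
  rwa [sub_sub_cancel] at h

end cHull

theorem stmt11_general (n : ℕ) (A : Set (EuclideanSpace ℝ (Fin n)))
    (hne : A.Nonempty)
    (hout : ∃ x : EuclideanSpace ℝ (Fin n), A ⊆ closedBall x 1) :
    Metric.diam (cHull A) ≤ Real.sqrt (2 * n / (n + 1)) * Metric.diam A := by
  obtain ⟨x₀, hx₀⟩ := hout
  have hK : IsCompact (closure A) := (isBounded_closedBall.subset hx₀).isCompact_closure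
  obtain ⟨z, r, hball⟩ := hK.exists_isMinimalEnclosingBall hne.closure
  obtain ⟨a, ha⟩ := hne
  have hr₀ : 0 ≤ r := dist_nonneg.trans (hball.1 (subset_closure ha))
  have hr₁ : r ≤ 1 := hball.2 x₀ 1 (closure_minimal hx₀ isClosed_closedBall)
  calc diam (cHull A) ≤ diam (closedBall z r) :=
        diam_mono (cHull_subset_closedBall (subset_closure.trans hball.1) hr₀ hr₁)
          isBounded_closedBall
    _ ≤ 2 * r := diam_closedBall hr₀
    _ ≤ √(2 * n / (n + 1)) * diam (closure A) := by
        simpa using hball.two_mul_le_sqrt_mul_diam hK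
    _ = √(2 * n / (n + 1)) * diam A := by rw [diam_closure]

/-- The diameter of the `c`-hull of a set of out-radius at most `1` is at most
`√(2n/(n+1))` times the diameter of the set. -/
theorem stmt11 (n : ℕ) (hn : 1 ≤ n) (A : Set (EuclideanSpace ℝ (Fin n)))
    (hne : A.Nonempty) (hbdd : Bornology.IsBounded A)
    (hout : ∃ x : EuclideanSpace ℝ (Fin n), A ⊆ closedBall x 1) :
    Metric.diam (cHull A) ≤ Real.sqrt (2 * n / (n + 1)) * Metric.diam A :=
  stmt11_general n A hne hout
end
end

section
/- Let n ≥ 2, let K ⊆ ℝⁿ be a nonempty compact ball-body, and let 0 < R < 1 be such that K ⊆ B(0,R) and K^c ⊆ B(0,R). Then B(0, √(5/4 − R²) − 1/2) ⊆ K^c ∪ (−K), where −K = {−x : x ∈ K}. -/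
/-! Let `‖y‖ ≤ r` and `y ∉ K^c`, witnessed by `x ∈ K` with `‖x - y‖ > 1`, and let `z ∈ K^c`,
so `‖z - x‖ ≤ 1`. Expanding both squares gives
`‖z + y‖² + ‖x - y‖² = ‖z‖² + ‖x‖² + 2‖y‖² + 2⟪z - x, y⟫ ≤ 2R² + 2r² + 2r`.
For `r = √(5/4 - R²) - 1/2` the right side is `2`, hence `‖z + y‖ < 1`.
So `-y` lies in `K^{cc} = K`. -/

open Metric Set Pointwise

noncomputable section

section InnerProductSpace

variable {E : Type*} [NormedAddCommGroup E] [InnerProductSpace ℝ E]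

theorem norm_add_sq_add_norm_sub_sq (x y z : E) :
    ‖z + y‖ ^ 2 + ‖x - y‖ ^ 2 = ‖z‖ ^ 2 + ‖x‖ ^ 2 + 2 * ‖y‖ ^ 2 + 2 * inner ℝ (z - x) y := by
  rw [norm_add_sq_real, norm_sub_sq_real, inner_sub_left]
  ring

theorem norm_add_lt_one_of_one_lt_norm_sub {x y z : E} {R r : ℝ}
    (hx : ‖x‖ ≤ R) (hz : ‖z‖ ≤ R) (hzx : ‖z - x‖ ≤ 1) (hy : ‖y‖ ≤ r)
    (hr : r ^ 2 + r ≤ 1 - R ^ 2) (hxy : 1 < ‖x - y‖) :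
    ‖z + y‖ < 1 := by
  have hinner : inner ℝ (z - x) y ≤ r :=
    calc inner ℝ (z - x) y ≤ ‖z - x‖ * ‖y‖ := real_inner_le_norm _ _
      _ ≤ 1 * r := mul_le_mul hzx hy (norm_nonneg y) zero_le_one
      _ = r := one_mul r
  have hx2 : ‖x‖ ^ 2 ≤ R ^ 2 := pow_le_pow_left₀ (norm_nonneg x) hx 2
  have hz2 : ‖z‖ ^ 2 ≤ R ^ 2 := pow_le_pow_left₀ (norm_nonneg z) hz 2
  have hy2 : ‖y‖ ^ 2 ≤ r ^ 2 := pow_le_pow_left₀ (norm_nonneg y) hy 2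
  have hxy2 : 1 < ‖x - y‖ ^ 2 := one_lt_pow₀ hxy two_ne_zero
  have hzy2 : ‖z + y‖ ^ 2 < 1 := by
    have := norm_add_sq_add_norm_sub_sq x y z
    linarith
  exact (sq_lt_one_iff₀ (norm_nonneg _)).mp hzy2

end InnerProductSpace

theorem sqrt_sub_half_sq_add_self {R : ℝ} (hR : R ^ 2 ≤ 5 / 4) :
    (√(5 / 4 - R ^ 2) - 1 / 2) ^ 2 + (√(5 / 4 - R ^ 2) - 1 / 2) = 1 - R ^ 2 := by
  have hsq : √(5 / 4 - R ^ 2) ^ 2 = 5 / 4 - R ^ 2 := Real.sq_sqrt (by linarith)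
  linear_combination hsq

theorem mem_cDual {n : ℕ} {A : Set (EuclideanSpace ℝ (Fin n))} {y : EuclideanSpace ℝ (Fin n)} :
    y ∈ cDual A ↔ ∀ x ∈ A, ‖x - y‖ ≤ 1 :=
  Iff.rfl

theorem closedBall_subset_cDual_union_neg_cDual_cDual {n : ℕ}
    {K : Set (EuclideanSpace ℝ (Fin n))} {R r : ℝ}
    (hK : K ⊆ closedBall 0 R) (hKc : cDual K ⊆ closedBall 0 R) (hr : r ^ 2 + r ≤ 1 - R ^ 2) :
    closedBall 0 r ⊆ cDual K ∪ -cDual (cDual K) := by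
  intro y hy
  rw [mem_closedBall_zero_iff] at hy
  by_cases hyc : y ∈ cDual K
  · exact Or.inl hyc
  right
  obtain ⟨x, hxK, hxy⟩ : ∃ x ∈ K, 1 < ‖x - y‖ := by
    simpa only [mem_cDual, not_forall, not_le, exists_prop] using hyc
  rw [mem_neg, mem_cDual]
  intro z hz
  rw [sub_neg_eq_add]
  refine (norm_add_lt_one_of_one_lt_norm_sub (mem_closedBall_zero_iff.mp (hK hxK))
    (mem_closedBall_zero_iff.mp (hKc hz)) ?_ hy hr hxy).le
  rw [norm_sub_rev]
  exact hz x hxK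

theorem stmt14_general (n : ℕ) (K : Set (EuclideanSpace ℝ (Fin n)))
    (hbb : K = cDual (cDual K))
    (R : ℝ) (hR : R ∈ Set.Ioo (0 : ℝ) 1)
    (hK : K ⊆ closedBall (0 : EuclideanSpace ℝ (Fin n)) R)
    (hKc : cDual K ⊆ closedBall (0 : EuclideanSpace ℝ (Fin n)) R) :
    closedBall (0 : EuclideanSpace ℝ (Fin n)) (Real.sqrt (5 / 4 - R ^ 2) - 1 / 2) ⊆
      cDual K ∪ (-K) := by
  have hR2 : R ^ 2 ≤ 5 / 4 := by nlinarith [hR.1, hR.2]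
  calc closedBall 0 (√(5 / 4 - R ^ 2) - 1 / 2) ⊆ cDual K ∪ -cDual (cDual K) :=
        closedBall_subset_cDual_union_neg_cDual_cDual hK hKc (sqrt_sub_half_sq_add_self hR2).le
    _ = cDual K ∪ -K := by rw [← hbb]

/-- Schramm-type theorem: if `K` is a nonempty compact ball-body with
`K, K^c ⊆ B(0,R)` for some `0 < R < 1`, then `B(0, √(5/4 - R²) - 1/2) ⊆ K^c ∪ (-K)`. -/
theorem stmt14 (n : ℕ) (hn : 2 ≤ n) (K : Set (EuclideanSpace ℝ (Fin n)))
    (hne : K.Nonempty) (hcomp : IsCompact K) (hbb : K = cDual (cDual K))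
    (R : ℝ) (hR : R ∈ Set.Ioo (0 : ℝ) 1)
    (hK : K ⊆ closedBall (0 : EuclideanSpace ℝ (Fin n)) R)
    (hKc : cDual K ⊆ closedBall (0 : EuclideanSpace ℝ (Fin n)) R) :
    closedBall (0 : EuclideanSpace ℝ (Fin n)) (Real.sqrt (5 / 4 - R ^ 2) - 1 / 2) ⊆
      cDual K ∪ (-K) :=
  stmt14_general n K hbb R hR hK hKc
end
end

section
/- Let n ≥ 2 and let K ⊆ ℝⁿ be a nonempty compact ball-body. Then K has no c-extremal points if and only if K = B(x,1) for some x ∈ ℝⁿ, i.e. the closed unit balls are the only nonempty compact ball-bodies without c-extremal points. -/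
/-!
A unit ball has no c-extremal points: every `x ∈ B(c, 1)` satisfies `x + c = y + z` for two
points `y ≠ x ≠ z` of the unit sphere around `c` (found using a direction orthogonal to `x - c`,
which needs `n ≥ 2`), and every unit ball containing `y` and `z` then contains `x`.

Conversely, a compact ball-body `K` is not all of `ℝⁿ`, so `K^c` is nonempty, and `K^c = {a}`
gives `K = B(a, 1)`. If `K^c` contained two points, `K` would lie in a ball `B(m, R)` with
`R < 1`, and a point `x` of `K` farthest from `m` would be c-extremal: by strict convexity every
other point of `K` lies strictly inside the unit ball whose centre is on the ray from `x` through
`m` and whose boundary passes through `x`, so pushing that centre slightly further gives a unit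
ball containing `y` and `z` but not `x`.
-/

open Metric Set

noncomputable section

/-- A point `x ∈ K` is `c`-extremal for `K` if `x ∈ conv_c({y,z})` with `y, z ∈ K` forces
`x = y` or `x = z`. -/
def IsCExtremal {n : ℕ} (K : Set (EuclideanSpace ℝ (Fin n)))
    (x : EuclideanSpace ℝ (Fin n)) : Prop :=
  x ∈ K ∧ ∀ y ∈ K, ∀ z ∈ K, x ∈ cHull {y, z} → x = y ∨ x = z

open Module Filter Topology

section StrictConvex

variable {E : Type*} [NormedAddCommGroup E] [NormedSpace ℝ E] [StrictConvexSpace ℝ E]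

theorem norm_add_smul_lt_of_norm_le_of_ne {u v : E} {t : ℝ} (huv : ‖u‖ ≤ ‖v‖) (hne : u ≠ v)
    (ht : 0 < t) : ‖u + t • v‖ < (1 + t) * ‖v‖ := by
  have htv : ‖t • v‖ = t * ‖v‖ := by rw [norm_smul, Real.norm_of_nonneg ht.le]
  rcases huv.lt_or_eq with hlt | heq
  · calc ‖u + t • v‖ ≤ ‖u‖ + ‖t • v‖ := norm_add_le _ _
      _ < (1 + t) * ‖v‖ := by linarith
  · have hray : ¬SameRay ℝ u (t • v) := fun h => hne <| by
      have h' : SameRay ℝ u v := by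
        simpa [inv_smul_smul₀ ht.ne'] using h.pos_smul_right (inv_pos.2 ht)
      exact h'.eq_of_norm_eq heq
    calc ‖u + t • v‖ < ‖u‖ + ‖t • v‖ := norm_add_lt_of_not_sameRay hray
      _ = (1 + t) * ‖v‖ := by rw [htv, heq]; ring

end StrictConvex

section InnerProduct

variable {E : Type*} [NormedAddCommGroup E] [InnerProductSpace ℝ E]

theorem exists_lt_inter_closedBall_subset_closedBall_midpoint {a b : E} (hab : a ≠ b) {r : ℝ}
    (hr : 0 < r) : ∃ R < r, closedBall a r ∩ closedBall b r ⊆ closedBall (midpoint ℝ a b) R := by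
  have hd : 0 < dist a b := dist_pos.2 hab
  refine ⟨√(r ^ 2 - (dist a b / 2) ^ 2), (Real.sqrt_lt' hr).2 (by nlinarith), ?_⟩
  rintro p ⟨hpa, hpb⟩
  rw [mem_closedBall] at hpa hpb ⊢
  have := EuclideanGeometry.dist_sq_add_dist_sq_eq_two_mul_dist_midpoint_sq_add_half_dist_sq p a b
  apply Real.le_sqrt_of_sq_le
  nlinarith [dist_nonneg (x := p) (y := a), dist_nonneg (x := p) (y := b)]

theorem norm_sub_le_one_of_add_eq {x y z w : E} (hy : ‖y‖ = 1) (hz : ‖z‖ = 1) (hx : ‖x‖ ≤ 1)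
    (hyz : y + z = x) (hwy : ‖y - w‖ ≤ 1) (hwz : ‖z - w‖ ≤ 1) : ‖x - w‖ ≤ 1 := by
  have hy' : ‖w‖ ^ 2 ≤ 2 * inner ℝ y w := by
    have := norm_sub_sq_real y w
    nlinarith [norm_nonneg (y - w)]
  have hz' : ‖w‖ ^ 2 ≤ 2 * inner ℝ z w := by
    have := norm_sub_sq_real z w
    nlinarith [norm_nonneg (z - w)]
  have hxw : ‖x - w‖ ^ 2 = ‖x‖ ^ 2 - 2 * (inner ℝ y w + inner ℝ z w) + ‖w‖ ^ 2 := by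
    rw [norm_sub_sq_real, ← hyz, inner_add_left]
  have : ‖x - w‖ ^ 2 ≤ 1 := by nlinarith [norm_nonneg x]
  exact (sq_le_one_iff₀ (norm_nonneg _)).1 this

theorem exists_norm_eq_one_inner_eq_zero [FiniteDimensional ℝ E] (hE : 2 ≤ finrank ℝ E) (u : E) :
    ∃ v : E, ‖v‖ = 1 ∧ inner ℝ u v = 0 := by
  have hne : (ℝ ∙ u)ᗮ ≠ ⊥ := by
    rw [Ne, Submodule.orthogonal_eq_bot_iff]
    intro htop
    have := finrank_span_le_card (R := ℝ) ({u} : Set E)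
    rw [htop, finrank_top] at this
    simp only [toFinset_singleton, Finset.card_singleton] at this
    omega
  obtain ⟨v, hv, hv0⟩ := Submodule.exists_mem_ne_zero_of_ne_bot hne
  refine ⟨‖v‖⁻¹ • v, norm_smul_inv_norm hv0, ?_⟩
  rw [inner_smul_right, Submodule.mem_orthogonal_singleton_iff_inner_right.1 hv, mul_zero]

theorem exists_norm_eq_one_add_eq [FiniteDimensional ℝ E] (hE : 2 ≤ finrank ℝ E) {u : E}
    (hu : ‖u‖ ≤ 2) : ∃ a b : E, ‖a‖ = 1 ∧ ‖b‖ = 1 ∧ a + b = u := by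
  obtain ⟨v, hv, huv⟩ := exists_norm_eq_one_inner_eq_zero hE u
  set β := √(1 - ‖u‖ ^ 2 / 4)
  have hβ : β ^ 2 = 1 - ‖u‖ ^ 2 / 4 := Real.sq_sqrt (by nlinarith [norm_nonneg u])
  have key : ∀ s : ℝ, s ^ 2 = β ^ 2 → ‖(1 / 2 : ℝ) • u + s • v‖ = 1 := fun s hs => by
    have h2 : ‖(1 / 2 : ℝ) • u + s • v‖ ^ 2 = 1 := by
      rw [norm_add_sq_real, inner_smul_left, inner_smul_right, huv, norm_smul, norm_smul, hv,
        Real.norm_eq_abs, Real.norm_eq_abs, mul_pow, mul_pow, sq_abs, sq_abs, hs, hβ]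
      ring
    exact (pow_left_inj₀ (norm_nonneg _) zero_le_one two_ne_zero).1 (by rw [h2, one_pow])
  refine ⟨(1 / 2 : ℝ) • u + β • v, (1 / 2 : ℝ) • u + (-β) • v, key β rfl, key (-β) (by ring), ?_⟩
  module

end InnerProduct

section BallBody

variable {n : ℕ}

theorem mem_cDual_pair {y z w : EuclideanSpace ℝ (Fin n)} :
    w ∈ cDual {y, z} ↔ ‖y - w‖ ≤ 1 ∧ ‖z - w‖ ≤ 1 := by
  simp [cDual]

theorem cDual_empty : cDual (∅ : Set (EuclideanSpace ℝ (Fin n))) = univ := by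
  simp [cDual]

theorem cDual_singleton (a : EuclideanSpace ℝ (Fin n)) : cDual {a} = closedBall a 1 := by
  ext; simp [cDual, dist_eq_norm, norm_sub_rev]

theorem mem_cHull_pair_of_add_eq {c x y z : EuclideanSpace ℝ (Fin n)} (hy : ‖y - c‖ = 1)
    (hz : ‖z - c‖ = 1) (hx : ‖x - c‖ ≤ 1) (hyz : y + z = x + c) : x ∈ cHull {y, z} := by
  intro w hw
  obtain ⟨hwy, hwz⟩ := mem_cDual_pair.1 hw
  rw [norm_sub_rev, ← sub_sub_sub_cancel_right x w c]
  refine norm_sub_le_one_of_add_eq hy hz hx ?_ ?_ ?_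
  · rw [sub_add_sub_comm, hyz]; abel
  · rwa [sub_sub_sub_cancel_right]
  · rwa [sub_sub_sub_cancel_right]

theorem not_isCExtremal_closedBall (hn : 2 ≤ n) (c x : EuclideanSpace ℝ (Fin n)) :
    ¬IsCExtremal (closedBall c 1) x := by
  rintro ⟨hx, hext⟩
  rw [mem_closedBall, dist_eq_norm] at hx
  obtain ⟨a, b, ha, hb, hab⟩ := exists_norm_eq_one_add_eq
    (by rwa [finrank_euclideanSpace_fin]) (hx.trans one_le_two)
  have hmem : ∀ v : EuclideanSpace ℝ (Fin n), ‖v‖ = 1 → c + v ∈ closedBall c 1 := fun v hv => by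
    simp [hv]
  rcases hext (c + a) (hmem a ha) (c + b) (hmem b hb) (mem_cHull_pair_of_add_eq (by simpa)
    (by simpa) hx (by rw [add_add_add_comm, hab]; abel)) with h | h
  · rw [h, add_sub_cancel_left, add_eq_left] at hab
    simp [hab] at hb
  · rw [h, add_sub_cancel_left, add_eq_right] at hab
    simp [hab] at ha

theorem isCExtremal_of_subset_closedBall {K : Set (EuclideanSpace ℝ (Fin n))}
    {m x : EuclideanSpace ℝ (Fin n)} (hx : x ∈ K) (hK : K ⊆ closedBall m (dist x m))
    (h1 : dist x m < 1) : IsCExtremal K x := by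
  refine ⟨hx, fun y hy z hz hxyz => ?_⟩
  by_contra! hne
  have hR : 0 < dist x m := dist_pos.2 fun hxm => hne.1 <| by
    rw [hxm]
    exact (by simpa [hxm] using hK hy : y = m).symm
  rw [dist_eq_norm] at hR hK h1
  set R := ‖x - m‖
  let w : ℝ → EuclideanSpace ℝ (Fin n) := fun t => m - t • (x - m)
  have hlt : ∀ p ∈ K, p ≠ x → ∀ t, 0 < t → ‖p - w t‖ < (1 + t) * R := fun p hp hpx t ht => by
    have hpw : p - w t = (p - m) + t • (x - m) := by simp only [w]; abel
    rw [hpw]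
    exact norm_add_smul_lt_of_norm_le_of_ne (by simpa [dist_eq_norm] using hK hp)
      (by simpa using hpx) ht
  set t₀ := R⁻¹ - 1
  have ht₀ : 0 < t₀ := sub_pos.2 ((one_lt_inv₀ hR).2 h1)
  have hRt₀ : (1 + t₀) * R = 1 := by rw [add_sub_cancel, inv_mul_cancel₀ hR.ne']
  have hev : ∀ p ∈ K, p ≠ x → ∀ᶠ t in 𝓝 t₀, ‖p - w t‖ < 1 := fun p hp hpx =>
    ((by fun_prop : Continuous fun t => ‖p - w t‖).tendsto t₀).eventually_lt_const
      (hRt₀ ▸ hlt p hp hpx t₀ ht₀)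
  obtain ⟨t, ⟨hyt, hzt⟩, htt₀⟩ := (((hev y hy (Ne.symm hne.1)).and
    (hev z hz (Ne.symm hne.2))).filter_mono nhdsWithin_le_nhds |>.and
    (self_mem_nhdsWithin : Ioi t₀ ∈ 𝓝[>] t₀)).exists
  have hwx : w t - x = -((1 + t) • (x - m)) := by simp only [w]; module
  have := hxyz (w t) (mem_cDual_pair.2 ⟨hyt.le, hzt.le⟩)
  rw [hwx, norm_neg, norm_smul, Real.norm_of_nonneg (by linarith [htt₀])] at this
  nlinarith [htt₀]

theorem cDual_subsingleton_of_forall_not_isCExtremal {K : Set (EuclideanSpace ℝ (Fin n))}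
    (hK : IsCompact K) (hne : K.Nonempty) (h : ∀ x, ¬IsCExtremal K x) : (cDual K).Subsingleton := by
  intro a ha b hb
  by_contra hab
  obtain ⟨R, hR1, hR⟩ := exists_lt_inter_closedBall_subset_closedBall_midpoint hab one_pos
  have hKR : K ⊆ closedBall (midpoint ℝ a b) R := fun p hp =>
    hR ⟨by simpa [dist_eq_norm] using ha p hp, by simpa [dist_eq_norm] using hb p hp⟩
  obtain ⟨x, hx, hmax⟩ := hK.exists_isMaxOn hne
    (continuous_id.dist continuous_const : Continuous fun p => dist p (midpoint ℝ a b)).continuousOn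
  exact h x (isCExtremal_of_subset_closedBall hx (fun p hp => hmax hp)
    ((hKR hx).trans_lt hR1))

theorem cDual_nonempty_of_isCompact (hn : 0 < n) {K : Set (EuclideanSpace ℝ (Fin n))}
    (hK : IsCompact K) (hbb : K = cDual (cDual K)) : (cDual K).Nonempty := by
  have : Nontrivial (EuclideanSpace ℝ (Fin n)) :=
    Module.nontrivial_of_finrank_pos (by rwa [finrank_euclideanSpace_fin])
  rw [nonempty_iff_ne_empty]
  intro h
  rw [h, cDual_empty] at hbb
  exact NormedSpace.unbounded_univ ℝ _ (hbb ▸ hK.isBounded)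

end BallBody

/-- The unit balls are the only nonempty compact ball-bodies with no `c`-extremal points. -/
theorem stmt15 (n : ℕ) (hn : 2 ≤ n) (K : Set (EuclideanSpace ℝ (Fin n)))
    (hne : K.Nonempty) (hcomp : IsCompact K) (hbb : K = cDual (cDual K)) :
    (¬ ∃ x : EuclideanSpace ℝ (Fin n), IsCExtremal K x) ↔
      ∃ c : EuclideanSpace ℝ (Fin n), K = closedBall c 1 := by
  refine ⟨fun hno => ?_, ?_⟩
  · obtain ⟨a, ha⟩ := cDual_nonempty_of_isCompact (by omega) hcomp hbb
    have hsub := cDual_subsingleton_of_forall_not_isCExtremal hcomp hne (not_exists.1 hno)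
    refine ⟨a, ?_⟩
    rw [hbb, hsub.eq_singleton_of_mem ha, cDual_singleton]
  · rintro ⟨c, rfl⟩ ⟨x, hx⟩
    exact not_isCExtremal_closedBall hn c x hx
end
end

section
/- Let n ≥ 2 and fix y₀ ∈ ℝⁿ. The function assigning to each x the volume of the 1-lens conv_c({x, y₀}), i.e. x ↦ Vol(conv_c({x, y₀})), is a convex function of x on the closed ball B(y₀, 2). -/
/-!
Let `d = ‖x - y₀‖ ≤ 2`, `s = d / 2` and `c = √(1 - s²)`. An isometry takes `{x, y₀}` to
`{s • e, -(s • e)}` for a fixed unit vector `e`, and `conv_c` of that pair is the lens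
`{t • e + u : u ⊥ e, t² + (‖u‖ + c)² ≤ 1}`: the intersection of the unit balls centred on the
sphere of radius `c` in `e^⊥`. Slicing orthogonally to `e`, its volume is
`κ ∫ max (√(1 - t²) - c) 0 ^ (n - 1) dt`, a convex decreasing function of `c`. As `c` is a
concave decreasing function of `d`, and `d` is a convex function of `x`, the volume is convex
in `x`.
-/

open Metric Set MeasureTheory

noncomputable section

open Module
open scoped ENNReal RealInnerProductSpace

lemma ConvexOn.comp_concaveOn_of_mapsTo {E : Type*} [AddCommGroup E] [Module ℝ E]
    {s : Set E} {t : Set ℝ} {f : E → ℝ} {g : ℝ → ℝ} (hg : ConvexOn ℝ t g)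
    (hf : ConcaveOn ℝ s f) (hg' : AntitoneOn g t) (hst : MapsTo f s t) :
    ConvexOn ℝ s (g ∘ f) :=
  ⟨hf.1, fun _ hx _ hy _ _ ha hb hab =>
    (hg' (hg.1 (hst hx) (hst hy) ha hb hab) (hst (hf.1 hx hy ha hb hab))
      (hf.2 hx hy ha hb hab)).trans (hg.2 (hst hx) (hst hy) ha hb hab)⟩

lemma ConcaveOn.comp_convexOn_of_mapsTo {E : Type*} [AddCommGroup E] [Module ℝ E]
    {s : Set E} {t : Set ℝ} {f : E → ℝ} {g : ℝ → ℝ} (hg : ConcaveOn ℝ t g)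
    (hf : ConvexOn ℝ s f) (hg' : AntitoneOn g t) (hst : MapsTo f s t) :
    ConcaveOn ℝ s (g ∘ f) :=
  ⟨hf.1, fun _ hx _ hy _ _ ha hb hab =>
    (hg.2 (hst hx) (hst hy) ha hb hab).trans
      (hg' (hst (hf.1 hx hy ha hb hab)) (hg.1 (hst hx) (hst hy) ha hb hab)
        (hf.2 hx hy ha hb hab))⟩

lemma convexOn_max_sub_pow (r : ℝ) (k : ℕ) : ConvexOn ℝ univ fun c : ℝ => max (r - c) 0 ^ k :=
  (((convexOn_const r convex_univ).sub (concaveOn_id convex_univ)).sup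
    (convexOn_const 0 convex_univ)).pow (fun _ _ => le_max_right _ _) k

lemma convexOn_toReal_lintegral {α : Type*} [MeasurableSpace α] {μ : Measure α} {s : Set ℝ}
    (hs : Convex ℝ s) {f : ℝ → α → ℝ} (hf : ∀ x, ConvexOn ℝ s (f · x))
    (hf₀ : ∀ c x, 0 ≤ f c x) (hmeas : ∀ c, Measurable (f c))
    (hfin : ∀ c ∈ s, ∫⁻ x, ENNReal.ofReal (f c x) ∂μ ≠ ∞) :
    ConvexOn ℝ s fun c => (∫⁻ x, ENNReal.ofReal (f c x) ∂μ).toReal := by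
  refine ⟨hs, fun c₁ h₁ c₂ h₂ a b ha hb hab => ?_⟩
  have key : ∫⁻ x, ENNReal.ofReal (f (a • c₁ + b • c₂) x) ∂μ ≤
      ENNReal.ofReal a * ∫⁻ x, ENNReal.ofReal (f c₁ x) ∂μ +
        ENNReal.ofReal b * ∫⁻ x, ENNReal.ofReal (f c₂ x) ∂μ := by
    rw [← lintegral_const_mul _ (hmeas c₁).ennreal_ofReal,
      ← lintegral_const_mul _ (hmeas c₂).ennreal_ofReal,
      ← lintegral_add_left ((hmeas c₁).ennreal_ofReal.const_mul _)]
    refine lintegral_mono fun x => ?_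
    rw [← ENNReal.ofReal_mul ha, ← ENNReal.ofReal_mul hb,
      ← ENNReal.ofReal_add (mul_nonneg ha (hf₀ _ _)) (mul_nonneg hb (hf₀ _ _))]
    exact ENNReal.ofReal_le_ofReal ((hf x).2 h₁ h₂ ha hb hab)
  have hfin₁ := ENNReal.mul_ne_top (ENNReal.ofReal_ne_top (r := a)) (hfin c₁ h₁)
  have hfin₂ := ENNReal.mul_ne_top (ENNReal.ofReal_ne_top (r := b)) (hfin c₂ h₂)
  have := ENNReal.toReal_mono (ENNReal.add_ne_top.2 ⟨hfin₁, hfin₂⟩) key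
  rwa [ENNReal.toReal_add hfin₁ hfin₂, ENNReal.toReal_mul, ENNReal.toReal_mul,
    ENNReal.toReal_ofReal ha, ENNReal.toReal_ofReal hb] at this

lemma addHaar_setOf_sq_add_add_sq_le_one {F : Type*} [NormedAddCommGroup F] [NormedSpace ℝ F]
    [MeasurableSpace F] [BorelSpace F] [FiniteDimensional ℝ F] [Nontrivial F]
    (μ : Measure F) [μ.IsAddHaarMeasure] {c : ℝ} (hc : 0 ≤ c) (t : ℝ) :
    μ {v | t ^ 2 + (‖v‖ + c) ^ 2 ≤ 1} =
      ENNReal.ofReal (max (√(1 - t ^ 2) - c) 0 ^ finrank ℝ F) * μ (ball 0 1) := by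
  have hsub : {v : F | t ^ 2 + (‖v‖ + c) ^ 2 ≤ 1} ⊆ closedBall 0 (√(1 - t ^ 2) - c) := by
    intro v hv
    have := Real.abs_le_sqrt (show (‖v‖ + c) ^ 2 ≤ 1 - t ^ 2 by linarith [hv.out])
    rw [abs_of_nonneg (by positivity)] at this
    rw [mem_closedBall_zero_iff]
    linarith
  rcases le_or_gt (√(1 - t ^ 2) - c) 0 with hr | hr
  · rw [max_eq_right hr, zero_pow finrank_pos.ne', ENNReal.ofReal_zero, zero_mul]
    refine measure_mono_null (hsub.trans (closedBall_subset_closedBall hr)) ?_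
    rw [closedBall_zero]
    exact measure_singleton 0
  · have h1t : 0 < 1 - t ^ 2 := Real.sqrt_pos.1 (by linarith)
    rw [max_eq_left hr.le, ← μ.addHaar_closedBall 0 hr.le]
    refine congrArg μ (hsub.antisymm fun v hv => ?_)
    rw [mem_closedBall_zero_iff] at hv
    have := (Real.le_sqrt (by positivity) h1t.le).1 (show ‖v‖ + c ≤ √(1 - t ^ 2) by linarith)
    exact (show t ^ 2 + (‖v‖ + c) ^ 2 ≤ 1 by linarith)

lemma add_sq_add_add_sq_le_one {s c t a p q : ℝ} (hs : 0 ≤ s) (hc : 0 ≤ c)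
    (hsc : s ^ 2 + c ^ 2 = 1) (ha : 0 ≤ a) (hp : 0 ≤ p)
    (h₁ : t ^ 2 + (p + c) ^ 2 ≤ 1) (h₂ : (a + s) ^ 2 + q ^ 2 ≤ 1) :
    (t + a) ^ 2 + (p + q) ^ 2 ≤ 1 := by
  -- In coordinates along `(s, c)` and its normal the claim reads `(u + w - 1)² + (v - z)² ≤ 1`,
  -- which reduces to `(1 - u) * (1 - w) ≤ v * z`.
  set u := t * s + (p + c) * c
  set v := (p + c) * s - t * c
  set w := (a + s) * s + q * c
  set z := (a + s) * c - q * s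
  have hts : t ≤ s := by nlinarith
  have hqc : q ≤ c := by nlinarith
  have hv : 0 ≤ v := by nlinarith
  have hz : 0 ≤ z := by nlinarith
  have hu : u ≤ 1 := by nlinarith [sq_nonneg v]
  have hw : w ≤ 1 := by nlinarith [sq_nonneg z]
  have hcu : c * (1 - u) ≤ s * v := by nlinarith
  have hsw : s * (1 - w) ≤ c * z := by nlinarith
  have key : (1 - u) * (1 - w) ≤ v * z := by
    rcases hs.eq_or_lt with rfl | hs
    · have : c = 1 := by nlinarith
      subst this
      nlinarith
    rcases hc.eq_or_lt with rfl | hc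
    · have : s = 1 := by nlinarith
      subst this
      nlinarith
    have := mul_le_mul hcu hsw (by nlinarith) (by positivity)
    have hsc0 : 0 < s * c := by positivity
    nlinarith
  nlinarith

/-- The planar case of `standardLens_subset_cHull`: `(t, -p)` lies in the lens with tips `(±s, 0)`
and `(a, q)` within distance `1` of both tips. -/
lemma sub_sq_add_add_sq_le_one {s c t a p q : ℝ} (hs : 0 ≤ s) (hc : 0 ≤ c)
    (hsc : s ^ 2 + c ^ 2 = 1) (hp : 0 ≤ p) (h₁ : t ^ 2 + (p + c) ^ 2 ≤ 1)
    (h₂ : (s - a) ^ 2 + q ^ 2 ≤ 1) (h₃ : (s + a) ^ 2 + q ^ 2 ≤ 1) :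
    (a - t) ^ 2 + (p + q) ^ 2 ≤ 1 := by
  rcases le_total 0 a with ha | ha
  · have := add_sq_add_add_sq_le_one hs hc hsc ha hp (t := -t) (by rwa [neg_sq]) (by linarith)
    linarith
  · have := add_sq_add_add_sq_le_one hs hc hsc (neg_nonneg.2 ha) hp h₁ (by linarith)
    linarith

/-- For points at distance `d ≤ 2`, the centres of the unit spheres through both of them lie at
distance `lensOffset d` from their midpoint. -/
def lensOffset (d : ℝ) : ℝ := √(1 - (d / 2) ^ 2)

lemma lensOffset_nonneg (d : ℝ) : 0 ≤ lensOffset d := Real.sqrt_nonneg _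

lemma antitoneOn_lensOffset : AntitoneOn lensOffset (Icc 0 2) := fun _ hd _ _ hdd' =>
  Real.sqrt_le_sqrt (by nlinarith [hd.1])

lemma concaveOn_lensOffset : ConcaveOn ℝ (Icc 0 2) lensOffset := by
  refine ⟨convex_Icc 0 2, fun A ⟨hA₀, hA₂⟩ B ⟨hB₀, hB₂⟩ a b ha hb hab => ?_⟩
  set P := lensOffset A
  set Q := lensOffset B
  have hP : P ^ 2 = 1 - (A / 2) ^ 2 := Real.sq_sqrt (by nlinarith)
  have hQ : Q ^ 2 = 1 - (B / 2) ^ 2 := Real.sq_sqrt (by nlinarith)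
  have hP₀ := lensOffset_nonneg A
  have hQ₀ := lensOffset_nonneg B
  have hPQ : P * Q ≤ 1 - A * B / 4 := by nlinarith [sq_nonneg (P - Q), sq_nonneg (A - B)]
  have hmid₀ : 0 ≤ a * A + b * B := by positivity
  have hmid₂ : a * A + b * B ≤ 2 := by nlinarith
  simp only [smul_eq_mul]
  refine (Real.le_sqrt (by positivity) (by nlinarith [mul_nonneg hmid₀ (sub_nonneg.2 hmid₂)])).2 ?_
  have habPQ := mul_le_mul_of_nonneg_left hPQ (mul_nonneg ha hb)
  rw [show (a * P + b * Q) ^ 2 = a ^ 2 * P ^ 2 + 2 * (a * b * (P * Q)) + b ^ 2 * Q ^ 2 by ring,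
    hP, hQ, ← hab]
  nlinarith

section InnerProductSpace

variable {V : Type*} [NormedAddCommGroup V] [InnerProductSpace ℝ V] {e : V}

def standardLens (e : V) (c : ℝ) : Set V :=
  {w | ⟪e, w⟫ ^ 2 + (‖w - ⟪e, w⟫ • e‖ + c) ^ 2 ≤ 1}

lemma exists_smul_add_of_norm_eq_one (he : ‖e‖ = 1) (w : V) :
    ∃ (t : ℝ) (u : V), ⟪e, u⟫ = 0 ∧ w = t • e + u := by
  refine ⟨⟪e, w⟫, w - ⟪e, w⟫ • e, ?_, (add_sub_cancel _ _).symm⟩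
  rw [inner_sub_right, real_inner_smul_right, real_inner_self_eq_norm_sq, he]
  ring

lemma norm_smul_add_sq (he : ‖e‖ = 1) {u : V} (hu : ⟪e, u⟫ = 0) (t : ℝ) :
    ‖t • e + u‖ ^ 2 = t ^ 2 + ‖u‖ ^ 2 := by
  rw [norm_add_sq_real, real_inner_smul_left, hu, norm_smul, he, Real.norm_eq_abs, mul_one, sq_abs]
  ring

lemma smul_add_mem_standardLens_iff (he : ‖e‖ = 1) {u : V} (hu : ⟪e, u⟫ = 0) {t c : ℝ} :
    t • e + u ∈ standardLens e c ↔ t ^ 2 + (‖u‖ + c) ^ 2 ≤ 1 := by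
  have ht : ⟪e, t • e + u⟫ = t := by
    rw [inner_add_right, real_inner_smul_right, real_inner_self_eq_norm_sq, he, hu]
    ring
  simp [standardLens, ht]

lemma standardLens_subset_closedBall (he : ‖e‖ = 1) {c : ℝ} (hc : 0 ≤ c) :
    standardLens e c ⊆ closedBall 0 1 := by
  intro w hw
  obtain ⟨t, u, hu, rfl⟩ := exists_smul_add_of_norm_eq_one he w
  rw [smul_add_mem_standardLens_iff he hu] at hw
  rw [mem_closedBall_zero_iff, ← sq_le_one_iff₀ (norm_nonneg _), norm_smul_add_sq he hu]
  nlinarith [norm_nonneg u]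

lemma standardLens_anti {c c' : ℝ} (hc : 0 ≤ c) (hcc' : c ≤ c') :
    standardLens e c' ⊆ standardLens e c := fun w hw => by
  simp only [standardLens, mem_ofPred_eq] at hw ⊢
  nlinarith [norm_nonneg (w - ⟪e, w⟫ • e)]

lemma exists_norm_eq_one_inner_eq_zero_s18 [FiniteDimensional ℝ V] (hV : 2 ≤ finrank ℝ V) (e : V) :
    ∃ e' : V, ‖e'‖ = 1 ∧ ⟪e, e'⟫ = 0 := by
  have hspan : finrank ℝ (ℝ ∙ e) ≤ 1 := by
    simpa using finrank_span_le_card ({e} : Set V)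
  have : 0 < finrank ℝ (ℝ ∙ e)ᗮ := by
    have := (ℝ ∙ e).finrank_add_finrank_orthogonal
    omega
  obtain ⟨v, hv⟩ := Module.finrank_pos_iff_exists_ne_zero.1 this
  have hv' : (v : V) ≠ 0 := by simpa using hv
  refine ⟨‖(v : V)‖⁻¹ • (v : V), norm_smul_inv_norm hv', ?_⟩
  rw [real_inner_smul_right, Submodule.mem_orthogonal_singleton_iff_inner_right.1 v.2, mul_zero]

lemma exists_isometryEquiv_image_pair (he : ‖e‖ = 1) (x y : V) :
    ∃ φ : V ≃ᵢ V, φ '' {(dist x y / 2) • e, -((dist x y / 2) • e)} = {x, y} := by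
  set T := (ℝ ∙ (dist x y • e - (x - y)))ᗮ.reflection
  have hT : T (dist x y • e) = x - y := Submodule.reflection_sub <| by
    rw [norm_smul, he, mul_one, Real.norm_of_nonneg dist_nonneg, dist_eq_norm]
  have hT' : T ((dist x y / 2) • e) = (1 / 2 : ℝ) • (x - y) := by
    rw [← hT, ← map_smul, smul_smul]
    ring_nf
  refine ⟨T.toIsometryEquiv.trans (IsometryEquiv.addLeft ((1 / 2 : ℝ) • (x + y))), ?_⟩
  rw [image_pair]
  simp only [IsometryEquiv.trans_apply, LinearIsometryEquiv.coe_toIsometryEquiv,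
    IsometryEquiv.addLeft_apply, map_neg, hT']
  congr 2 <;> module

variable [FiniteDimensional ℝ V] [MeasurableSpace V] [BorelSpace V]

lemma volume_image_isometryEquiv (φ : V ≃ᵢ V) (s : Set V) : volume (φ '' s) = volume s := by
  rw [← InnerProductSpace.euclideanHausdorffMeasure_eq_volume]
  exact φ.isometry.euclideanHausdorffMeasure_image s

lemma volume_standardLens_eq_lintegral (he : ‖e‖ = 1) (c : ℝ) :
    volume (standardLens e c) =
      ∫⁻ a : ℝ ∙ e, volume {b : (ℝ ∙ e)ᗮ | ‖a‖ ^ 2 + (‖b‖ + c) ^ 2 ≤ 1} := by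
  set S : Set ((ℝ ∙ e) × (ℝ ∙ e)ᗮ) := {p | ‖p.1‖ ^ 2 + (‖p.2‖ + c) ^ 2 ≤ 1}
  have hS : MeasurableSet S := (isClosed_le (by fun_prop) continuous_const).measurableSet
  have hpre : standardLens e c = (ℝ ∙ e).measurableEquivProd (0 : V) ⁻¹' S := by
    ext w
    have h₁ : ‖(ℝ ∙ e).orthogonalProjectionOnto w‖ = |⟪e, w⟫| := by
      rw [Submodule.coe_norm, ← Submodule.starProjection_apply,
        Submodule.starProjection_unit_singleton ℝ he, norm_smul, he, mul_one, Real.norm_eq_abs]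
    have h₂ : ‖(ℝ ∙ e)ᗮ.orthogonalProjectionOnto w‖ = ‖w - ⟪e, w⟫ • e‖ := by
      rw [Submodule.coe_norm, ← Submodule.starProjection_apply,
        Submodule.starProjection_orthogonal_val, Submodule.starProjection_unit_singleton ℝ he]
    simp only [S, standardLens, mem_ofPred_eq, mem_preimage, Submodule.measurableEquivProd_apply,
      vsub_eq_sub, sub_zero, h₁, h₂, sq_abs]
  have hmp := (ℝ ∙ e).measurePreserving_measurableEquivProd (0 : V)
  rw [InnerProductSpace.euclideanHausdorffMeasure_eq_volume] at hmp
  rw [hpre, hmp.measure_preimage hS.nullMeasurableSet, Measure.volume_eq_prod,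
    Measure.prod_apply hS]
  rfl

lemma volume_standardLens_lt_top (he : ‖e‖ = 1) {c : ℝ} (hc : 0 ≤ c) :
    volume (standardLens e c) < ∞ :=
  (measure_mono (standardLens_subset_closedBall he hc)).trans_lt measure_closedBall_lt_top

lemma antitoneOn_volume_standardLens (he : ‖e‖ = 1) :
    AntitoneOn (fun c => (volume (standardLens e c)).toReal) (Ici 0) := fun _ hc _ _ hcc' =>
  ENNReal.toReal_mono (volume_standardLens_lt_top he hc).ne
    (measure_mono (standardLens_anti hc hcc'))

lemma convexOn_volume_standardLens (he : ‖e‖ = 1) (hV : 2 ≤ finrank ℝ V) :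
    ConvexOn ℝ (Ici 0) fun c => (volume (standardLens e c)).toReal := by
  have : Nontrivial (ℝ ∙ e)ᗮ := by
    rw [← Module.finrank_pos_iff (R := ℝ)]
    have := (ℝ ∙ e).finrank_add_finrank_orthogonal
    have := finrank_span_singleton (K := ℝ) (norm_ne_zero_iff.1 (he.trans_ne one_ne_zero))
    omega
  set κ := volume (ball (0 : (ℝ ∙ e)ᗮ) 1)
  set f : ℝ → (ℝ ∙ e) → ℝ := fun c a => max (√(1 - ‖a‖ ^ 2) - c) 0 ^ finrank ℝ (ℝ ∙ e)ᗮ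
  have hvol : ∀ c ∈ Ici (0 : ℝ),
      volume (standardLens e c) = (∫⁻ a, ENNReal.ofReal (f c a)) * κ := fun c hc => by
    rw [volume_standardLens_eq_lintegral he, ← lintegral_mul_const' _ _ measure_ball_lt_top.ne]
    exact lintegral_congr fun a => addHaar_setOf_sq_add_add_sq_le_one volume hc ‖a‖
  have hκ : κ ≠ 0 := (measure_ball_pos _ _ one_pos).ne'
  have hfin : ∀ c ∈ Ici (0 : ℝ), ∫⁻ a, ENNReal.ofReal (f c a) ≠ ∞ := fun c hc htop =>
    (volume_standardLens_lt_top he hc).ne (by rw [hvol c hc, htop, ENNReal.top_mul hκ])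
  refine ((convexOn_toReal_lintegral (convex_Ici 0)
    (fun a => (convexOn_max_sub_pow _ _).subset (subset_univ _) (convex_Ici 0))
    (fun _ _ => pow_nonneg (le_max_right _ _) _) (fun c => by fun_prop) hfin).smul
    (ENNReal.toReal_nonneg (a := κ))).congr fun c hc => ?_
  dsimp only
  rw [hvol c hc, ENNReal.toReal_mul, smul_eq_mul, mul_comm]

end InnerProductSpace

section Euclidean

variable {n : ℕ}

lemma cDual_image (φ : EuclideanSpace ℝ (Fin n) ≃ᵢ EuclideanSpace ℝ (Fin n))
    (A : Set (EuclideanSpace ℝ (Fin n))) : cDual (φ '' A) = φ '' cDual A := by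
  ext y
  obtain ⟨y, rfl⟩ := φ.surjective y
  simp [cDual, ← dist_eq_norm, φ.dist_eq]

lemma cHull_image (φ : EuclideanSpace ℝ (Fin n) ≃ᵢ EuclideanSpace ℝ (Fin n))
    (A : Set (EuclideanSpace ℝ (Fin n))) : cHull (φ '' A) = φ '' cHull A := by
  rw [cHull, cHull, cDual_image, cDual_image]

variable {e : EuclideanSpace ℝ (Fin n)} {s c : ℝ}

lemma standardLens_subset_cHull (he : ‖e‖ = 1) (hs : 0 ≤ s) (hc : 0 ≤ c)
    (hsc : s ^ 2 + c ^ 2 = 1) : standardLens e c ⊆ cHull {s • e, -(s • e)} := by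
  intro w hw z hz
  obtain ⟨t, u, hu, rfl⟩ := exists_smul_add_of_norm_eq_one he w
  obtain ⟨a, v, hv, rfl⟩ := exists_smul_add_of_norm_eq_one he z
  rw [smul_add_mem_standardLens_iff he hu] at hw
  have hv' : ⟪e, -v⟫ = 0 := by rw [inner_neg_right, hv, neg_zero]
  have h₁ := hz _ (Or.inl rfl)
  have h₂ := hz _ (Or.inr rfl)
  rw [show s • e - (a • e + v) = (s - a) • e + -v by module, ← sq_le_one_iff₀ (norm_nonneg _),
    norm_smul_add_sq he hv', norm_neg] at h₁
  rw [show -(s • e) - (a • e + v) = (-s - a) • e + -v by module,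
    ← sq_le_one_iff₀ (norm_nonneg _), norm_smul_add_sq he hv', norm_neg] at h₂
  rw [show a • e + v - (t • e + u) = (a - t) • e + (v - u) by module,
    ← sq_le_one_iff₀ (norm_nonneg _),
    norm_smul_add_sq he (by rw [inner_sub_right, hu, hv, sub_zero])]
  have := sub_sq_add_add_sq_le_one hs hc hsc (norm_nonneg u) hw h₁ (by linarith)
  nlinarith [norm_sub_le v u, norm_nonneg (v - u), norm_nonneg u, norm_nonneg v]

lemma cHull_subset_standardLens (hn : 2 ≤ n) (he : ‖e‖ = 1) (hc : 0 ≤ c)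
    (hsc : s ^ 2 + c ^ 2 = 1) : cHull {s • e, -(s • e)} ⊆ standardLens e c := by
  intro w hw
  obtain ⟨t, u, hu, rfl⟩ := exists_smul_add_of_norm_eq_one he w
  rw [smul_add_mem_standardLens_iff he hu]
  obtain ⟨e', he', he'e, hue'⟩ : ∃ e', ‖e'‖ = 1 ∧ ⟪e, e'⟫ = 0 ∧ u = ‖u‖ • e' := by
    rcases eq_or_ne u 0 with rfl | hu0
    · obtain ⟨e', h₁, h₂⟩ :=
        exists_norm_eq_one_inner_eq_zero_s18 (by rwa [finrank_euclideanSpace_fin]) e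
      exact ⟨e', h₁, h₂, by simp⟩
    · refine ⟨‖u‖⁻¹ • u, norm_smul_inv_norm hu0, ?_,
        (smul_inv_smul₀ (norm_ne_zero_iff.2 hu0) u).symm⟩
      rw [real_inner_smul_right, hu, mul_zero]
  have hce' : ⟪e, c • e'⟫ = 0 := by rw [real_inner_smul_right, he'e, mul_zero]
  have hnorm : ‖c • e'‖ = c := by rw [norm_smul, he', mul_one, Real.norm_of_nonneg hc]
  have hz : -(c • e') ∈ cDual {s • e, -(s • e)} := by
    rintro x (rfl | rfl)
    · rw [sub_neg_eq_add, ← sq_le_one_iff₀ (norm_nonneg _), norm_smul_add_sq he hce', hnorm, hsc]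
    · rw [← neg_smul, sub_neg_eq_add, ← sq_le_one_iff₀ (norm_nonneg _),
        norm_smul_add_sq he hce', hnorm]
      linarith
  have h := hw _ hz
  rw [show -(c • e') - (t • e + u) = (-t) • e + -((c + ‖u‖) • e') by
      rw [add_smul, ← hue']; module,
    ← sq_le_one_iff₀ (norm_nonneg _),
    norm_smul_add_sq he (by rw [inner_neg_right, real_inner_smul_right, he'e, mul_zero, neg_zero]),
    norm_neg, norm_smul, he', mul_one, Real.norm_of_nonneg (by positivity)] at h
  linarith

lemma cHull_pair_eq_standardLens (hn : 2 ≤ n) (he : ‖e‖ = 1) (hs : 0 ≤ s) (hc : 0 ≤ c)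
    (hsc : s ^ 2 + c ^ 2 = 1) : cHull {s • e, -(s • e)} = standardLens e c :=
  (cHull_subset_standardLens hn he hc hsc).antisymm (standardLens_subset_cHull he hs hc hsc)

lemma volume_cHull_pair (hn : 2 ≤ n) (he : ‖e‖ = 1) {x y : EuclideanSpace ℝ (Fin n)}
    (hxy : dist x y ≤ 2) :
    volume (cHull {x, y}) = volume (standardLens e (lensOffset (dist x y))) := by
  obtain ⟨φ, hφ⟩ := exists_isometryEquiv_image_pair he x y
  have hsc : (dist x y / 2) ^ 2 + lensOffset (dist x y) ^ 2 = 1 := by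
    rw [lensOffset, Real.sq_sqrt (by nlinarith [dist_nonneg (x := x) (y := y)])]
    ring
  rw [← hφ, cHull_image, volume_image_isometryEquiv,
    cHull_pair_eq_standardLens hn he (by positivity) (lensOffset_nonneg _) hsc]

end Euclidean

/-- The volume of the `1`-lens `conv_c({x, y₀})` is a convex function of `x` on
`B(y₀, 2)`. -/
theorem stmt18 (n : ℕ) (hn : 2 ≤ n) (y₀ : EuclideanSpace ℝ (Fin n)) :
    ConvexOn ℝ (closedBall y₀ 2)
      (fun x : EuclideanSpace ℝ (Fin n) => (volume (cHull {x, y₀})).toReal) := by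
  set e : EuclideanSpace ℝ (Fin n) := EuclideanSpace.single ⟨0, by omega⟩ 1
  have he : ‖e‖ = 1 := by simp [e]
  have hrank : 2 ≤ finrank ℝ (EuclideanSpace ℝ (Fin n)) := by rwa [finrank_euclideanSpace_fin]
  have hdist : MapsTo (dist · y₀) (closedBall y₀ 2) (Icc 0 2) := fun _ hx => ⟨dist_nonneg, hx⟩
  have hoffset : ConcaveOn ℝ (closedBall y₀ 2) (lensOffset ∘ (dist · y₀)) :=
    concaveOn_lensOffset.comp_convexOn_of_mapsTo (convexOn_dist y₀ (convex_closedBall y₀ 2))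
      antitoneOn_lensOffset hdist
  refine ((convexOn_volume_standardLens he hrank).comp_concaveOn_of_mapsTo hoffset
    (antitoneOn_volume_standardLens he) fun x _ => lensOffset_nonneg _).congr fun x hx => ?_
  simp only [Function.comp_apply, volume_cHull_pair hn he hx]
end
end
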